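/- arXiv:1904.12335 — 8 statements merged into one kernel-verified Lean document; each statement's English description precedes it below -/
import Mathlib

section
/- Let H be a nontrivial real Hilbert space and let f : H → ℝ be Fréchet differentiable, convex, L-smooth of order ℓ > 1 (for some L > 0), and C-sharp of order θ ∈ (0,1) on a set K (for some C > 0). Then θ ≤ 1/ℓ. -/
open RealInnerProductSpace

/-- If `f` is Fréchet differentiable, convex, `L`-smooth of order `ℓ > 1`, and `C`-sharp
of order `θ ∈ (0,1)` on `K`, then `θ ≤ 1/ℓ`. -/
theorem stmt_0
    {H : Type*} [NormedAddCommGroup H] [InnerProductSpace ℝ H] [CompleteSpace H]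
    [Nontrivial H]
    (f : H → ℝ) (f' : H → H) (hdiff : ∀ x, HasGradientAt f (f' x) x)
    (hconv : ConvexOn ℝ Set.univ f)
    (L ℓ : ℝ) (hL : 0 < L) (hℓ : 1 < ℓ)
    (hsmooth : ∀ x y : H, f y - f x - ⟪f' x, y - x⟫ ≤ L / ℓ * ‖y - x‖ ^ ℓ)
    (C θ : ℝ) (hC : 0 < C) (hθ : θ ∈ Set.Ioo (0 : ℝ) 1)
    (K : Set H) (hK : Bornology.IsBounded K)
    (hne : {z : H | ∀ y, f z ≤ f y}.Nonempty)
    (hsub : {z : H | ∀ y, f z ≤ f y} ⊆ interior K)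
    (hsharp : ∀ x ∈ K, ∀ xs ∈ {z : H | ∀ y, f z ≤ f y},
      Metric.infDist x {z : H | ∀ y, f z ≤ f y} ≤ C * (f x - f xs) ^ θ) :
    θ ≤ 1 / ℓ := by
  by_contra hcon
  push_neg at hcon
  set M := {z : H | ∀ y, f z ≤ f y} with hMdef
  obtain ⟨x₀, hx₀⟩ := hne
  have hℓ0 : (0 : ℝ) < ℓ := lt_trans one_pos hℓ
  have hθ0 : (0 : ℝ) < θ := hθ.1
  -- continuity of f
  have hfc : Continuous f :=
    continuous_iff_continuousAt.mpr fun x => (hdiff x).differentiableAt.continuousAt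
  -- M as a sublevel set
  have hMeq : M = {z : H | f z ≤ f x₀} := by
    ext z
    constructor
    · intro hz; exact hz x₀
    · intro hz y; exact le_trans hz (hx₀ y)
  have hMclosed : IsClosed M := by
    rw [hMeq]; exact isClosed_le hfc continuous_const
  have hMconvex : Convex ℝ M := by
    rw [hMeq]
    have := hconv.convex_le (f x₀)
    convert this using 1
    ext z; simp
  -- a point outside K
  obtain ⟨R, hR⟩ := hK.subset_closedBall 0
  obtain ⟨v0, hv0⟩ := exists_ne (0 : H)
  set y : H := ((|R| + 1) / ‖v0‖) • v0 with hy
  have hynorm : ‖y‖ = |R| + 1 := by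
    rw [hy, norm_smul, norm_div, Real.norm_eq_abs, norm_norm,
      div_mul_cancel₀ _ (norm_ne_zero_iff.mpr hv0)]
    rw [abs_of_nonneg]; positivity
  have hyK : y ∉ K := by
    intro hyk
    have := hR hyk
    rw [Metric.mem_closedBall, dist_zero_right, hynorm] at this
    have : |R| + 1 ≤ |R| := le_trans this (le_abs_self R)
    linarith
  have hyM : y ∉ M := fun h => hyK (interior_subset (hsub h))
  -- projection of y onto M
  obtain ⟨v, hvM, hv⟩ :=
    exists_norm_eq_iInf_of_complete_convex ⟨x₀, hx₀⟩ hMclosed.isComplete hMconvex y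
  have hproj : ∀ w ∈ M, ⟪y - v, w - v⟫ ≤ 0 :=
    (norm_eq_iInf_iff_real_inner_le_zero hMconvex hvM).1 hv
  have hyv : y - v ≠ 0 := sub_ne_zero.mpr (fun h => hyM (h ▸ hvM))
  have hd : (0 : ℝ) < ‖y - v‖ := norm_pos_iff.mpr hyv
  set u : H := (1 / ‖y - v‖) • (y - v) with hu
  have hunorm : ‖u‖ = 1 := by
    rw [hu, norm_smul, norm_div, Real.norm_eq_abs, norm_norm, abs_one,
      div_mul_cancel₀ _ (ne_of_gt hd)]
  -- ball around v inside K
  have hvK : v ∈ interior K := hsub hvM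
  obtain ⟨ε, hε, hball⟩ := Metric.isOpen_iff.1 isOpen_interior v hvK
  -- gradient at v vanishes
  have hminv : IsLocalMin f v := Filter.Eventually.of_forall hvM
  have hf'v : f' v = 0 := by
    have h0 : InnerProductSpace.toDual ℝ H (f' v) = 0 :=
      hminv.hasFDerivAt_eq_zero (hasGradientAt_iff_hasFDerivAt.1 (hdiff v))
    simpa using (InnerProductSpace.toDual ℝ H).map_eq_zero_iff.mp h0
  -- main inequality for small t
  have key : ∀ t : ℝ, 0 < t → t < ε → t ≤ (C * (L / ℓ) ^ θ) * t ^ (ℓ * θ) := by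
    intro t ht htε
    set xt : H := v + t • u with hxt
    have hxtv : ‖xt - v‖ = t := by
      rw [hxt, add_sub_cancel_left, norm_smul, Real.norm_eq_abs, hunorm,
        abs_of_pos ht, mul_one]
    have hxtK : xt ∈ K := by
      apply interior_subset (hball ?_)
      rw [Metric.mem_ball, dist_eq_norm, hxtv]
      exact htε
    -- lower bound on infDist
    have hdistlb : ∀ w ∈ M, t ≤ dist xt w := by
      intro w hw
      have hin : ⟪v - w, u⟫ ≥ 0 := by
        have h1 : ⟪y - v, w - v⟫ ≤ 0 := hproj w hw
        rw [hu, real_inner_smul_right]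
        have h2 : ⟪v - w, y - v⟫ = -⟪y - v, w - v⟫ := by
          rw [real_inner_comm, ← neg_sub w v, inner_neg_right]
        rw [h2]
        have : (0:ℝ) ≤ 1 / ‖y - v‖ := by positivity
        nlinarith
      have hsq : t ^ 2 ≤ ‖xt - w‖ ^ 2 := by
        have hexp : xt - w = (v - w) + t • u := by
          rw [hxt]; abel
        rw [hexp, @norm_add_sq_real, real_inner_smul_right, norm_smul,
          Real.norm_eq_abs, abs_of_pos ht, hunorm]
        nlinarith [norm_nonneg (v - w), sq_nonneg (‖v - w‖)]
      rw [dist_eq_norm]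
      nlinarith [norm_nonneg (xt - w)]
    have hlow : t ≤ Metric.infDist xt M := by
      by_contra hb
      push_neg at hb
      obtain ⟨w, hw, hdw⟩ := (Metric.infDist_lt_iff ⟨x₀, hx₀⟩).1 hb
      exact absurd hdw (not_lt.mpr (hdistlb w hw))
    -- upper bound via sharpness and smoothness
    have hfub : f xt - f v ≤ L / ℓ * t ^ ℓ := by
      have := hsmooth v xt
      rw [hf'v, inner_zero_left, sub_zero, hxtv] at this
      exact this
    have hf0 : 0 ≤ f xt - f v := sub_nonneg.mpr (hvM xt)
    have hup : Metric.infDist xt M ≤ C * (L / ℓ * t ^ ℓ) ^ θ := by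
      refine le_trans (hsharp xt hxtK v hvM) ?_
      have := Real.rpow_le_rpow hf0 hfub (le_of_lt hθ0)
      nlinarith
    have heq : (L / ℓ * t ^ ℓ) ^ θ = (L / ℓ) ^ θ * t ^ (ℓ * θ) := by
      rw [Real.mul_rpow (by positivity) (Real.rpow_nonneg (le_of_lt ht) ℓ),
        ← Real.rpow_mul (le_of_lt ht)]
    calc t ≤ Metric.infDist xt M := hlow
      _ ≤ C * (L / ℓ * t ^ ℓ) ^ θ := hup
      _ = (C * (L / ℓ) ^ θ) * t ^ (ℓ * θ) := by rw [heq]; ring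
  -- derive contradiction
  set A := C * (L / ℓ) ^ θ with hA
  have hA0 : 0 < A := by positivity
  have hα : 1 < ℓ * θ := by
    have := (div_lt_iff₀ hℓ0).1 hcon
    linarith [this]
  set β := ℓ * θ - 1 with hβdef
  have hβ : 0 < β := by simp only [hβdef]; linarith
  set c := min (1 / (2 * A)) 1 with hc
  have hc0 : 0 < c := lt_min (by positivity) one_pos
  have hc2 : c ≤ 1 / (2 * A) := min_le_left _ _
  set t := min (ε / 2) (c ^ (1 / β)) with htdef
  have ht0 : 0 < t := lt_min (by linarith) (Real.rpow_pos_of_pos hc0 _)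
  have htε : t < ε := lt_of_le_of_lt (min_le_left _ _) (by linarith)
  have h1 : t ≤ A * t ^ (ℓ * θ) := key t ht0 htε
  have htβ : t ^ β ≤ c := by
    calc t ^ β ≤ (c ^ (1 / β)) ^ β :=
          Real.rpow_le_rpow (le_of_lt ht0) (min_le_right _ _) (le_of_lt hβ)
      _ = c := by
          rw [← Real.rpow_mul (le_of_lt hc0), one_div_mul_cancel (ne_of_gt hβ),
            Real.rpow_one]
  have hsplit : t ^ (ℓ * θ) = t ^ β * t := by
    rw [show ℓ * θ = β + 1 by simp [hβdef], Real.rpow_add ht0, Real.rpow_one]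
  rw [hsplit] at h1
  have htβ0 : 0 ≤ t ^ β := Real.rpow_nonneg (le_of_lt ht0) β
  have hAc : A * c ≤ 1 / 2 := by
    rw [le_div_iff₀ (by positivity : (0:ℝ) < 2 * A)] at hc2
    linarith
  nlinarith [mul_le_mul_of_nonneg_left htβ (le_of_lt hA0)]
end

section
/- Let H be a real Hilbert space and let f : H → ℝ be Fréchet differentiable and L-smooth of order ℓ > 1 (for some L > 0). Let x ∈ H, let v ∈ H with v ≠ 0, and let φ ≤ 0 be such that ⟨∇f(x), v⟩ ≤ φ. Then inf_{γ ≥ 0} f(x + γv) ≤ f(x) − (−φ)^{ℓ̄} / (ℓ̄ · L^{ℓ̄−1} · ‖v‖^{ℓ̄}), where ℓ̄ := ℓ/(ℓ−1). -/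
/-! Along the ray `γ ↦ x + γ • v`, smoothness bounds `f` by the one-dimensional model
`f x + (c / ℓ) γ ^ ℓ - a γ` with `a = -φ` and `c = L ‖v‖ ^ ℓ`. This model attains its minimum
`-a ^ ℓ̄ / (ℓ̄ c ^ (ℓ̄ - 1))` at `γ = (a / c) ^ (ℓ̄ - 1)`, and `c ^ (ℓ̄ - 1) = L ^ (ℓ̄ - 1) ‖v‖ ^ ℓ̄`
because `ℓ (ℓ̄ - 1) = ℓ̄`. -/

open RealInnerProductSpace Real

theorem Real.HolderConjugate.exists_div_mul_rpow_sub_mul_eq {p q a c : ℝ}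
    (h : p.HolderConjugate q) (ha : 0 ≤ a) (hc : 0 < c) :
    ∃ t : ℝ, 0 ≤ t ∧ c / p * t ^ p - a * t = -(a ^ q / (q * c ^ (q - 1))) := by
  have hq : (q - 1) * p = q := h.symm.sub_one_mul_conj
  refine ⟨(a / c) ^ (q - 1), by positivity, ?_⟩
  have hcq : c ^ q = c * c ^ (q - 1) := by
    rw [← rpow_one_add' hc.le (by linarith [h.symm.pos]), add_sub_cancel]
  have haq : a ^ q = a * a ^ (q - 1) := by
    rw [← rpow_one_add' ha (by linarith [h.symm.pos]), add_sub_cancel]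
  have hpow : c / p * ((a / c) ^ (q - 1)) ^ p = a ^ q / c ^ (q - 1) / p := by
    rw [← rpow_mul (by positivity), hq, div_rpow ha hc.le, hcq]
    field_simp
  have hlin : a * (a / c) ^ (q - 1) = a ^ q / c ^ (q - 1) := by
    rw [div_rpow ha hc.le, haq, mul_div_assoc]
  rw [hpow, hlin]
  have : c ^ (q - 1) ≠ 0 := (rpow_pos_of_pos hc _).ne'
  field_simp
  linear_combination a ^ q * h.inv_sub_one

theorem apply_add_smul_le_of_inner_le {H : Type*} [NormedAddCommGroup H] [InnerProductSpace ℝ H]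
    {f : H → ℝ} {g x v : H} {L ℓ φ γ : ℝ}
    (hsmooth : ∀ y, f y - f x - ⟪g, y - x⟫ ≤ L / ℓ * ‖y - x‖ ^ ℓ)
    (hφ : ⟪g, v⟫ ≤ φ) (hγ : 0 ≤ γ) :
    f (x + γ • v) ≤ f x + (L * ‖v‖ ^ ℓ / ℓ * γ ^ ℓ - -φ * γ) := by
  have hstep := hsmooth (x + γ • v)
  rw [add_sub_cancel_left, real_inner_smul_right, norm_smul, norm_of_nonneg hγ,
    mul_rpow hγ (norm_nonneg v)] at hstep
  have hinner : γ * ⟪g, v⟫ ≤ γ * φ := mul_le_mul_of_nonneg_left hφ hγ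
  linarith [show L / ℓ * (γ ^ ℓ * ‖v‖ ^ ℓ) = L * ‖v‖ ^ ℓ / ℓ * γ ^ ℓ by ring]

theorem stmt_8_general
    {H : Type*} [NormedAddCommGroup H] [InnerProductSpace ℝ H]
    (f : H → ℝ) (f' : H → H)
    (L ℓ : ℝ) (hL : 0 < L) (hℓ : 1 < ℓ)
    (hsmooth : ∀ x y : H, f y - f x - ⟪f' x, y - x⟫ ≤ L / ℓ * ‖y - x‖ ^ ℓ)
    (x v : H) (hv : v ≠ 0) (φ : ℝ) (hφ : φ ≤ 0) (hvφ : ⟪f' x, v⟫ ≤ φ)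
    (ℓb : ℝ) (hℓb : ℓb = ℓ / (ℓ - 1)) :
    ∃ γ : ℝ, 0 ≤ γ ∧
      f (x + γ • v) ≤ f x - (-φ) ^ ℓb / (ℓb * L ^ (ℓb - 1) * ‖v‖ ^ ℓb) := by
  have hconj : ℓ.HolderConjugate ℓb := (holderConjugate_iff_eq_conjExponent hℓ).2 hℓb
  have hc : 0 < L * ‖v‖ ^ ℓ := by have := norm_pos_iff.2 hv; positivity
  obtain ⟨γ, hγ, hmin⟩ := hconj.exists_div_mul_rpow_sub_mul_eq (neg_nonneg.2 hφ) hc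
  have hpow : (L * ‖v‖ ^ ℓ) ^ (ℓb - 1) = L ^ (ℓb - 1) * ‖v‖ ^ ℓb := by
    rw [mul_rpow hL.le (by positivity), ← rpow_mul (norm_nonneg v), mul_comm ℓ,
      hconj.symm.sub_one_mul_conj]
  refine ⟨γ, hγ, ?_⟩
  calc f (x + γ • v) ≤ f x + (L * ‖v‖ ^ ℓ / ℓ * γ ^ ℓ - -φ * γ) :=
        apply_add_smul_le_of_inner_le (hsmooth x) hvφ hγ
    _ = f x - (-φ) ^ ℓb / (ℓb * L ^ (ℓb - 1) * ‖v‖ ^ ℓb) := by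
        rw [hmin, hpow]; ring

/-- If `f` is `L`-smooth of order `ℓ > 1`, `v ≠ 0`, `φ ≤ 0`, and `⟪∇f x, v⟫ ≤ φ`, then
`inf_{γ ≥ 0} f (x + γ v) ≤ f x - (-φ)^ℓ̄ / (ℓ̄ L^(ℓ̄-1) ‖v‖^ℓ̄)` where `ℓ̄ = ℓ/(ℓ-1)`. -/
theorem stmt_8
    {H : Type*} [NormedAddCommGroup H] [InnerProductSpace ℝ H] [CompleteSpace H]
    (f : H → ℝ) (f' : H → H) (hdiff : ∀ x, HasGradientAt f (f' x) x)
    (L ℓ : ℝ) (hL : 0 < L) (hℓ : 1 < ℓ)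
    (hsmooth : ∀ x y : H, f y - f x - ⟪f' x, y - x⟫ ≤ L / ℓ * ‖y - x‖ ^ ℓ)
    (x v : H) (hv : v ≠ 0) (φ : ℝ) (hφ : φ ≤ 0) (hvφ : ⟪f' x, v⟫ ≤ φ)
    (ℓb : ℝ) (hℓb : ℓb = ℓ / (ℓ - 1)) :
    ∃ γ : ℝ, 0 ≤ γ ∧
      f (x + γ • v) ≤ f x - (-φ) ^ ℓb / (ℓb * L ^ (ℓb - 1) * ‖v‖ ^ ℓb) :=
  stmt_8_general f f' L ℓ hL hℓ hsmooth x v hv φ hφ hvφ ℓb hℓb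
end

section
/- Let H be a real Hilbert space and let f : H → ℝ be Fréchet differentiable and L-smooth of order ℓ > 1 (for some L > 0). Let x ∈ H, let V ⊆ H be a closed linear subspace, and let g be the orthogonal projection of ∇f(x) onto V. Suppose there exist v ∈ V with v ≠ 0 and φ ≤ 0 such that ⟨∇f(x), v⟩ ≤ φ. Then inf_{γ ≥ 0} f(x − γg) ≤ f(x) − (−φ)^{ℓ̄} / (ℓ̄ · L^{ℓ̄−1} · ‖v‖^{ℓ̄}), where ℓ̄ := ℓ/(ℓ−1). -/
open RealInnerProductSpace

/-! A step of length `γ` along `-g` decreases `f` by at least `γ‖g‖² - (L/ℓ)(γ‖g‖)^ℓ`, because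
`⟪∇f x, g⟫ = ‖g‖²` for the projection `g`. Optimising over `γ` is the equality case of Young's
inequality and gives the decrease `‖g‖^ℓ̄ / (ℓ̄ L^(ℓ̄-1))`; finally `-φ ≤ ⟪g, -v⟫ ≤ ‖g‖‖v‖`. -/

theorem Real.HolderConjugate.neg_mul_add_rpow_eq {p q a L : ℝ} (hpq : p.HolderConjugate q)
    (ha : 0 ≤ a) (hL : 0 < L) :
    -(a * (a / L) ^ (q - 1)) + L / p * ((a / L) ^ (q - 1)) ^ p = -(a ^ q / (q * L ^ (q - 1))) := by
  have hLq : L ^ q = L ^ (q - 1) * L := by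
    rw [← Real.rpow_add_one hL.ne', sub_add_cancel]
  have hpow : ((a / L) ^ (q - 1)) ^ p = a ^ q / L ^ q := by
    rw [← Real.rpow_mul (div_nonneg ha hL.le), hpq.symm.sub_one_mul_conj,
      Real.div_rpow ha hL.le]
  have hmul : a * (a / L) ^ (q - 1) = a ^ q / L ^ (q - 1) := by
    rw [Real.div_rpow ha hL.le, mul_div_assoc', ← Real.rpow_one_add' ha (by linarith [hpq.symm.pos]),
      add_sub_cancel]
  rw [hpow, hmul, hLq]
  field_simp [hpq.ne_zero, hpq.symm.ne_zero]
  linear_combination (-a ^ q) * hpq.mul_eq_add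

section SmoothDescent

variable {H : Type*} [NormedAddCommGroup H] [InnerProductSpace ℝ H] {f : H → ℝ} {f' : H → H}
  {L ℓ : ℝ} {x g : H}

theorem le_sub_mul_add_rpow_of_smooth
    (hsmooth : ∀ y, f y - f x - ⟪f' x, y - x⟫ ≤ L / ℓ * ‖y - x‖ ^ ℓ)
    (hg : ⟪f' x, g⟫ = ‖g‖ ^ 2) {γ : ℝ} (hγ : 0 ≤ γ) :
    f (x - γ • g) ≤ f x - ‖g‖ * (γ * ‖g‖) + L / ℓ * (γ * ‖g‖) ^ ℓ := by
  have h := hsmooth (x - γ • g)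
  rw [sub_sub_cancel_left, inner_neg_right, inner_smul_right, hg, norm_neg, norm_smul,
    Real.norm_of_nonneg hγ] at h
  linarith

theorem exists_le_sub_rpow_div_of_smooth {ℓb : ℝ}
    (hsmooth : ∀ y, f y - f x - ⟪f' x, y - x⟫ ≤ L / ℓ * ‖y - x‖ ^ ℓ)
    (hg : ⟪f' x, g⟫ = ‖g‖ ^ 2) (hL : 0 < L) (hℓ : ℓ.HolderConjugate ℓb) :
    ∃ γ : ℝ, 0 ≤ γ ∧ f (x - γ • g) ≤ f x - ‖g‖ ^ ℓb / (ℓb * L ^ (ℓb - 1)) := by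
  set t := (‖g‖ / L) ^ (ℓb - 1)
  have ht : 0 ≤ t := Real.rpow_nonneg (div_nonneg (norm_nonneg g) hL.le) _
  have hγt : t / ‖g‖ * ‖g‖ = t := by
    rcases eq_or_ne ‖g‖ 0 with hg0 | hg0
    · simp [t, hg0, Real.zero_rpow hℓ.symm.sub_one_ne_zero]
    · exact div_mul_cancel₀ t hg0
  refine ⟨t / ‖g‖, div_nonneg ht (norm_nonneg g), ?_⟩
  have h := le_sub_mul_add_rpow_of_smooth hsmooth hg (div_nonneg ht (norm_nonneg g))
  rw [hγt, sub_eq_add_neg _ (‖g‖ * t), add_assoc, hℓ.neg_mul_add_rpow_eq (norm_nonneg g) hL] at h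
  linarith

end SmoothDescent

theorem stmt_9_general
    {H : Type*} [NormedAddCommGroup H] [InnerProductSpace ℝ H]
    (f : H → ℝ) (f' : H → H)
    (L ℓ : ℝ) (hL : 0 < L) (hℓ : 1 < ℓ)
    (hsmooth : ∀ x y : H, f y - f x - ⟪f' x, y - x⟫ ≤ L / ℓ * ‖y - x‖ ^ ℓ)
    (x : H) (V : Submodule ℝ H)
    (g : H) (hgV : g ∈ V) (hgproj : ∀ w ∈ V, ⟪g, w⟫ = ⟪f' x, w⟫)
    (v : H) (hvV : v ∈ V)
    (φ : ℝ) (hφ : φ ≤ 0) (hvφ : ⟪f' x, v⟫ ≤ φ)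
    (ℓb : ℝ) (hℓb : ℓb = ℓ / (ℓ - 1)) :
    ∃ γ : ℝ, 0 ≤ γ ∧
      f (x - γ • g) ≤ f x - (-φ) ^ ℓb / (ℓb * L ^ (ℓb - 1) * ‖v‖ ^ ℓb) := by
  have hconj : ℓ.HolderConjugate ℓb := (Real.holderConjugate_iff_eq_conjExponent hℓ).2 hℓb
  have hgg : ⟪f' x, g⟫ = ‖g‖ ^ 2 := by rw [← hgproj g hgV, real_inner_self_eq_norm_sq]
  obtain ⟨γ, hγ, hdescent⟩ := exists_le_sub_rpow_div_of_smooth (hsmooth x) hgg hL hconj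
  have hφg : -φ ≤ ‖g‖ * ‖v‖ := by
    have hcs := (neg_le_abs ⟪g, v⟫).trans (abs_real_inner_le_norm g v)
    linarith [hgproj v hvV]
  refine ⟨γ, hγ, hdescent.trans ?_⟩
  rw [div_mul_eq_div_div_swap ((-φ) ^ ℓb), ← Real.div_rpow (neg_nonneg.2 hφ) (norm_nonneg v)]
  have hLpow : 0 < L ^ (ℓb - 1) := Real.rpow_pos_of_pos hL _
  have hℓbpos : 0 < ℓb := hconj.symm.pos
  gcongr
  · exact div_nonneg (neg_nonneg.2 hφ) (norm_nonneg v)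
  · exact div_le_of_le_mul₀ (norm_nonneg v) (norm_nonneg g) hφg

/-- If `f` is `L`-smooth of order `ℓ > 1`, `g` is the orthogonal projection of `∇f x` onto a
closed subspace `V`, and there is `v ∈ V`, `v ≠ 0`, and `φ ≤ 0` with `⟪∇f x, v⟫ ≤ φ`, then
`inf_{γ ≥ 0} f (x - γ g) ≤ f x - (-φ)^ℓ̄ / (ℓ̄ L^(ℓ̄-1) ‖v‖^ℓ̄)` where `ℓ̄ = ℓ/(ℓ-1)`. -/
theorem stmt_9
    {H : Type*} [NormedAddCommGroup H] [InnerProductSpace ℝ H] [CompleteSpace H]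
    (f : H → ℝ) (f' : H → H) (hdiff : ∀ x, HasGradientAt f (f' x) x)
    (L ℓ : ℝ) (hL : 0 < L) (hℓ : 1 < ℓ)
    (hsmooth : ∀ x y : H, f y - f x - ⟪f' x, y - x⟫ ≤ L / ℓ * ‖y - x‖ ^ ℓ)
    (x : H) (V : Submodule ℝ H) (hV : IsClosed (V : Set H))
    (g : H) (hgV : g ∈ V) (hgproj : ∀ w ∈ V, ⟪g, w⟫ = ⟪f' x, w⟫)
    (v : H) (hvV : v ∈ V) (hv : v ≠ 0)
    (φ : ℝ) (hφ : φ ≤ 0) (hvφ : ⟪f' x, v⟫ ≤ φ)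
    (ℓb : ℝ) (hℓb : ℓb = ℓ / (ℓ - 1)) :
    ∃ γ : ℝ, 0 ≤ γ ∧
      f (x - γ • g) ≤ f x - (-φ) ^ ℓb / (ℓb * L ^ (ℓb - 1) * ‖v‖ ^ ℓb) :=
  stmt_9_general f f' L ℓ hL hℓ hsmooth x V g hgV hgproj v hvV φ hφ hvφ ℓb hℓb
end

section
/- Let H be a real Hilbert space and let f : H → ℝ be continuous, convex, and C-sharp of order θ ∈ (0,1) on K (for some C > 0). Let x ∈ H, let x* := proj_{argmin_H f}(x), and let ρ ∈ (0, 1] be such that x* + ρ(x − x*) ∈ K. Then ρ‖x − x*‖ ≤ C·ρ^θ·(f(x) − f(x*))^θ, i.e., ‖x − x*‖ ≤ (C/ρ^{1−θ})·(f(x) − min_H f)^θ. -/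
open RealInnerProductSpace

theorem aux_stmt_12 {H : Type*} [NormedAddCommGroup H] [InnerProductSpace ℝ H]
    (a b : H) (h : ⟪a, b⟫ ≤ 0) : ‖a‖ ≤ ‖a - b‖ := by
  have h2 : ‖a‖ ^ 2 ≤ ‖a - b‖ ^ 2 := by
    rw [@norm_sub_sq_real]
    nlinarith [sq_nonneg ‖b‖]
  exact le_of_pow_le_pow_left₀ two_ne_zero (norm_nonneg _) h2

/-- If `f` is continuous, convex, and `C`-sharp of order `θ ∈ (0,1)` on `K`,
`xs` is the orthogonal projection of `x` onto `argmin f`, and `ρ ∈ (0, 1]` satisfies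
`xs + ρ (x - xs) ∈ K`, then `ρ ‖x - xs‖ ≤ C ρ^θ (f x - f xs)^θ`, i.e.,
`‖x - xs‖ ≤ (C / ρ^(1-θ)) (f x - min f)^θ`. -/
theorem stmt_12
    {H : Type*} [NormedAddCommGroup H] [InnerProductSpace ℝ H] [CompleteSpace H]
    (f : H → ℝ) (hcont : Continuous f) (hconv : ConvexOn ℝ Set.univ f)
    (C θ : ℝ) (hC : 0 < C) (hθ : θ ∈ Set.Ioo (0 : ℝ) 1)
    (K : Set H) (hK : Bornology.IsBounded K)
    (hne : {z : H | ∀ y, f z ≤ f y}.Nonempty)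
    (hsub : {z : H | ∀ y, f z ≤ f y} ⊆ interior K)
    (hsharp : ∀ w ∈ K, ∀ m ∈ {z : H | ∀ y, f z ≤ f y},
      Metric.infDist w {z : H | ∀ y, f z ≤ f y} ≤ C * (f w - f m) ^ θ)
    (x xs : H) (hxsmem : xs ∈ {z : H | ∀ y, f z ≤ f y})
    (hxsproj : ∀ m ∈ {z : H | ∀ y, f z ≤ f y}, ⟪x - xs, m - xs⟫ ≤ 0)
    (ρ : ℝ) (hρ : ρ ∈ Set.Ioc (0 : ℝ) 1)
    (hmem : xs + ρ • (x - xs) ∈ K) :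
    ρ * ‖x - xs‖ ≤ C * ρ ^ θ * (f x - f xs) ^ θ ∧
    ‖x - xs‖ ≤ C / ρ ^ (1 - θ) * (f x - f xs) ^ θ := by
  obtain ⟨hρ0, hρ1⟩ := hρ
  obtain ⟨hθ0, hθ1⟩ := hθ
  set S := {z : H | ∀ y, f z ≤ f y} with hS
  set w := xs + ρ • (x - xs) with hw
  have hfx : f xs ≤ f x := hxsmem x
  -- infDist bound from below
  have hwxs : ‖w - xs‖ = ρ * ‖x - xs‖ := by
    rw [hw, add_sub_cancel_left, norm_smul, Real.norm_eq_abs, abs_of_pos hρ0]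
  have hlow : ρ * ‖x - xs‖ ≤ Metric.infDist w S := by
    rw [← hwxs]
    by_contra hcon
    rw [not_le] at hcon
    obtain ⟨m, hm, hdm⟩ := (Metric.infDist_lt_iff hne).1 hcon
    refine absurd hdm (not_lt.2 ?_)
    have hinner : ⟪w - xs, m - xs⟫ ≤ 0 := by
      rw [hw, add_sub_cancel_left, real_inner_smul_left]
      exact mul_nonpos_of_nonneg_of_nonpos hρ0.le (hxsproj m hm)
    have := aux_stmt_12 (w - xs) (m - xs) hinner
    rw [sub_sub_sub_cancel_right] at this
    rwa [dist_eq_norm]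
  -- convexity bound
  have hfw : f w - f xs ≤ ρ * (f x - f xs) := by
    have hcomb : (1 - ρ) • xs + ρ • x = w := by rw [hw]; module
    have := hconv.2 (Set.mem_univ xs) (Set.mem_univ x) (by linarith : (0:ℝ) ≤ 1 - ρ)
      hρ0.le (by ring)
    rw [hcomb] at this
    simp only [smul_eq_mul] at this
    nlinarith
  have hfw0 : 0 ≤ f w - f xs := by simp [sub_nonneg, hxsmem w]
  have hrpow : (f w - f xs) ^ θ ≤ ρ ^ θ * (f x - f xs) ^ θ := by
    rw [← Real.mul_rpow hρ0.le (by linarith)]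
    exact Real.rpow_le_rpow hfw0 hfw hθ0.le
  have hmain : ρ * ‖x - xs‖ ≤ C * ρ ^ θ * (f x - f xs) ^ θ := by
    calc ρ * ‖x - xs‖ ≤ Metric.infDist w S := hlow
      _ ≤ C * (f w - f xs) ^ θ := hsharp w hmem xs hxsmem
      _ ≤ C * (ρ ^ θ * (f x - f xs) ^ θ) := by
          exact mul_le_mul_of_nonneg_left hrpow hC.le
      _ = C * ρ ^ θ * (f x - f xs) ^ θ := by ring
  refine ⟨hmain, ?_⟩
  have hρθ : (0:ℝ) < ρ ^ (1 - θ) := Real.rpow_pos_of_pos hρ0 _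
  rw [div_mul_eq_mul_div, le_div_iff₀ hρθ]
  calc ‖x - xs‖ * ρ ^ (1 - θ) = (ρ * ‖x - xs‖) * ρ ^ (-θ) := by
        rw [Real.rpow_sub hρ0, Real.rpow_one, Real.rpow_neg hρ0.le]
        field_simp
    _ ≤ (C * ρ ^ θ * (f x - f xs) ^ θ) * ρ ^ (-θ) :=
        mul_le_mul_of_nonneg_right hmain (Real.rpow_nonneg hρ0.le _)
    _ = C * (f x - f xs) ^ θ * (ρ ^ θ * ρ ^ (-θ)) := by ring
    _ = C * (f x - f xs) ^ θ := by
        rw [← Real.rpow_add hρ0]; simp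
end

section
/- Let H be a real Hilbert space, let D′ ⊆ H be a set such that the open ball B(0, r) is contained in conv(D′) for some r > 0, and let f : H → ℝ be Fréchet differentiable, convex, and C-sharp of order θ ∈ (0,1) on K (for some C > 0). Let x ∈ H with f(x) > min_H f, let x* := proj_{argmin_H f}(x), and let ρ ∈ (0, 1] be such that x* + ρ(x − x*) ∈ K. Then f(x) − min_H f ≤ (1/ρ) · ((2C/r) · sup_{z ∈ conv(D′)} ⟨−∇f(x), z⟩)^{1/(1−θ)}. -/
/-!
Convexity gives `Δ := f x - min f ≤ ⟪-∇f x, xs - x⟫ ≤ ‖∇f x‖ ‖x - xs‖`, and since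
`B(0, r) ⊆ conv D'`, any upper bound `b` of `⟪-∇f x, ·⟫` on `conv D'` satisfies
`r ‖∇f x‖ ≤ b`. On the other side, the variational inequality of the projection makes `xs` a
nearest minimiser of every point `xs + ρ (x - xs)`, so sharpness there, together with convexity
along the segment, yields `ρ ‖x - xs‖ ≤ C (ρ Δ)^θ`. Eliminating `‖x - xs‖` leaves `ρ Δ ≤ (C b / r) (ρ Δ)^θ`.
-/

open RealInnerProductSpace

section

variable {H : Type*} [NormedAddCommGroup H] [InnerProductSpace ℝ H]

theorem ConvexOn.inner_le_sub_of_hasGradientAt [CompleteSpace H] {s : Set H} {f : H → ℝ}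
    {g x y : H} (hf : ConvexOn ℝ s f) (hx : x ∈ s) (hy : y ∈ s) (hg : HasGradientAt f g x) :
    ⟪g, y - x⟫ ≤ f y - f x := by
  have hφ : HasDerivAt (f ∘ (AffineMap.lineMap x y : ℝ → H)) ⟪g, y - x⟫ 0 := by
    have hg' : HasFDerivAt f (InnerProductSpace.toDual ℝ H g)
        (AffineMap.lineMap x y (0 : ℝ)) := by
      simpa using hg.hasFDerivAt
    simpa using hg'.comp_hasDerivAt (0 : ℝ) AffineMap.hasDerivAt_lineMap
  have hslope := (hf.comp_affineMap (AffineMap.lineMap (k := ℝ) x y)).le_slope_of_hasDerivAt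
    (x := 0) (y := 1) (by simpa using hx) (by simpa using hy) one_pos hφ
  simpa [slope_def_field] using hslope

theorem ConvexOn.map_add_smul_sub_le {s : Set H} {f : H → ℝ} {a b : H} {t : ℝ}
    (hf : ConvexOn ℝ s f) (ha : a ∈ s) (hb : b ∈ s) (ht₀ : 0 ≤ t) (ht₁ : t ≤ 1) :
    f (a + t • (b - a)) - f a ≤ t * (f b - f a) := by
  have h := hf.2 ha hb (sub_nonneg.mpr ht₁) ht₀ (sub_add_cancel 1 t)
  rw [show (1 - t) • a + t • b = a + t • (b - a) by module, smul_eq_mul, smul_eq_mul] at h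
  linarith

theorem mul_norm_le_of_inner_le_on_ball {v : H} {r b : ℝ} (hr : 0 < r)
    (h : ∀ z ∈ Metric.ball (0 : H) r, ⟪v, z⟫ ≤ b) : r * ‖v‖ ≤ b := by
  have hclosed : Metric.closedBall (0 : H) r ⊆ {z | ⟪v, z⟫ ≤ b} := by
    rw [← closure_ball (0 : H) hr.ne']
    exact (isClosed_le (continuous_const.inner continuous_id) continuous_const)
      |>.closure_subset_iff.mpr h
  rcases eq_or_ne v 0 with rfl | hv
  · simpa using h 0 (Metric.mem_ball_self hr)
  have hv' : 0 < ‖v‖ := norm_pos_iff.mpr hv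
  have hmem : (r / ‖v‖) • v ∈ Metric.closedBall (0 : H) r := by
    rw [mem_closedBall_zero_iff, norm_smul, Real.norm_of_nonneg (by positivity),
      div_mul_cancel₀ r hv'.ne']
  have := hclosed hmem
  simp only [Set.mem_ofPred_eq, real_inner_smul_right, real_inner_self_eq_norm_sq] at this
  calc r * ‖v‖ = r / ‖v‖ * ‖v‖ ^ 2 := by field_simp
    _ ≤ b := this

theorem norm_le_infDist_add_of_inner_nonpos {S : Set H} {p v : H} (hS : S.Nonempty)
    (h : ∀ m ∈ S, ⟪v, m - p⟫ ≤ 0) : ‖v‖ ≤ Metric.infDist (p + v) S := by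
  refine (Metric.le_infDist hS).mpr fun m hm => ?_
  rw [dist_eq_norm, show p + v - m = v - (m - p) by abel]
  refine (sq_le_sq₀ (norm_nonneg _) (norm_nonneg _)).mp ?_
  rw [norm_sub_sq_real]
  nlinarith [h m hm, sq_nonneg ‖m - p‖]

theorem mul_norm_sub_le_infDist_add_smul {S : Set H} {p x : H} {ρ : ℝ} (hp : p ∈ S)
    (hproj : ∀ m ∈ S, ⟪x - p, m - p⟫ ≤ 0) (hρ : 0 ≤ ρ) :
    ρ * ‖x - p‖ ≤ Metric.infDist (p + ρ • (x - p)) S := by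
  have h := norm_le_infDist_add_of_inner_nonpos ⟨p, hp⟩ (v := ρ • (x - p)) fun m hm => by
    rw [real_inner_smul_left]
    exact mul_nonpos_of_nonneg_of_nonpos hρ (hproj m hm)
  rwa [norm_smul, Real.norm_of_nonneg hρ] at h

end

theorem le_rpow_of_le_mul_rpow {u K θ : ℝ} (hu : 0 < u) (hθ : θ < 1) (h : u ≤ K * u ^ θ) :
    u ≤ K ^ (1 / (1 - θ)) := by
  have h1θ : 0 < 1 - θ := sub_pos.mpr hθ
  have hpow : u ^ (1 - θ) ≤ K := by
    rwa [Real.rpow_sub hu, Real.rpow_one, div_le_iff₀ (Real.rpow_pos_of_pos hu θ)]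
  calc u = (u ^ (1 - θ)) ^ (1 / (1 - θ)) := by
        rw [← Real.rpow_mul hu.le, mul_one_div_cancel h1θ.ne', Real.rpow_one]
    _ ≤ K ^ (1 / (1 - θ)) := by gcongr

theorem le_one_div_mul_rpow_of_le_mul_of_mul_le_rpow {Δ s A C ρ θ : ℝ} (hΔ : 0 < Δ)
    (hρ : 0 < ρ) (hθ : θ < 1) (hA : 0 ≤ A) (hupper : Δ ≤ A * s) (hlower : ρ * s ≤ C * (ρ * Δ) ^ θ) :
    Δ ≤ 1 / ρ * (A * C) ^ (1 / (1 - θ)) := by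
  have hρΔ : ρ * Δ ≤ (A * C) ^ (1 / (1 - θ)) := by
    refine le_rpow_of_le_mul_rpow (mul_pos hρ hΔ) hθ ?_
    calc ρ * Δ ≤ A * (ρ * s) := by nlinarith
      _ ≤ A * (C * (ρ * Δ) ^ θ) := by gcongr
      _ = A * C * (ρ * Δ) ^ θ := by ring
  calc Δ = 1 / ρ * (ρ * Δ) := by field_simp
    _ ≤ 1 / ρ * (A * C) ^ (1 / (1 - θ)) := by gcongr

theorem stmt_13_general
    {H : Type*} [NormedAddCommGroup H] [InnerProductSpace ℝ H] [CompleteSpace H]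
    (D' : Set H) (r : ℝ) (hr : 0 < r)
    (hball : Metric.ball (0 : H) r ⊆ convexHull ℝ D')
    (f : H → ℝ) (f' : H → H) (hdiff : ∀ x, HasGradientAt f (f' x) x)
    (hconv : ConvexOn ℝ Set.univ f)
    (C θ : ℝ) (hC : 0 < C) (hθ : θ ∈ Set.Ioo (0 : ℝ) 1)
    (K : Set H)
    (hsharp : ∀ w ∈ K, ∀ m ∈ {z : H | ∀ y, f z ≤ f y},
      Metric.infDist w {z : H | ∀ y, f z ≤ f y} ≤ C * (f w - f m) ^ θ)
    (x xs : H) (hxsmem : xs ∈ {z : H | ∀ y, f z ≤ f y})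
    (hxsproj : ∀ m ∈ {z : H | ∀ y, f z ≤ f y}, ⟪x - xs, m - xs⟫ ≤ 0)
    (hfx : f xs < f x)
    (ρ : ℝ) (hρ : ρ ∈ Set.Ioc (0 : ℝ) 1)
    (hmem : xs + ρ • (x - xs) ∈ K) :
    ∀ b : ℝ, (∀ z ∈ convexHull ℝ D', ⟪-f' x, z⟫ ≤ b) →
      f x - f xs ≤ 1 / ρ * (2 * C / r * b) ^ (1 / (1 - θ)) := by
  intro b hb
  obtain ⟨hρ₀, hρ₁⟩ := hρ
  have hgrad : r * ‖f' x‖ ≤ b := by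
    simpa using mul_norm_le_of_inner_le_on_ball hr fun z hz => hb z (hball hz)
  have hb₀ : 0 ≤ b := le_trans (by positivity) hgrad
  have hdescent : f x - f xs ≤ b / r * ‖x - xs‖ := by
    have := hconv.inner_le_sub_of_hasGradientAt trivial trivial (hdiff x) (y := xs)
    have hnorm : ‖f' x‖ ≤ b / r := by rw [le_div_iff₀ hr]; linarith
    calc f x - f xs ≤ ⟪-f' x, xs - x⟫ := by rw [inner_neg_left]; linarith
      _ ≤ ‖f' x‖ * ‖x - xs‖ := by
        simpa [norm_sub_rev] using real_inner_le_norm (-f' x) (xs - x)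
      _ ≤ b / r * ‖x - xs‖ := by gcongr
  have hgrowth : ρ * ‖x - xs‖ ≤ C * (ρ * (f x - f xs)) ^ θ := by
    have hseg := hconv.map_add_smul_sub_le trivial trivial hρ₀.le hρ₁ (a := xs) (b := x)
    calc ρ * ‖x - xs‖ ≤ C * (f (xs + ρ • (x - xs)) - f xs) ^ θ :=
          (mul_norm_sub_le_infDist_add_smul hxsmem hxsproj hρ₀.le).trans
            (hsharp _ hmem xs hxsmem)
      _ ≤ C * (ρ * (f x - f xs)) ^ θ := by gcongr; exacts [sub_nonneg.mpr (hxsmem _), hθ.1.le]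
  calc f x - f xs ≤ 1 / ρ * (b / r * C) ^ (1 / (1 - θ)) :=
        le_one_div_mul_rpow_of_le_mul_of_mul_le_rpow (sub_pos.mpr hfx) hρ₀ hθ.2 (by positivity)
          hdescent hgrowth
    _ ≤ 1 / ρ * (2 * C / r * b) ^ (1 / (1 - θ)) := by
      gcongr 1 / ρ * ?_ ^ _
      · exact one_div_nonneg.mpr (sub_nonneg.mpr hθ.2.le)
      · linarith [show 2 * C / r * b = 2 * (b / r * C) by ring, show 0 ≤ b / r * C by positivity]

/-- If `B(0, r) ⊆ conv(D')`, `f` is Fréchet differentiable, convex, and `C`-sharp of order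
`θ ∈ (0,1)` on `K`, `f x > min f`, `xs` is the projection of `x` onto `argmin f`, and
`ρ ∈ (0,1]` satisfies `xs + ρ (x - xs) ∈ K`, then
`f x - min f ≤ (1/ρ) ((2C/r) sup_{z ∈ conv(D')} ⟪-∇f x, z⟫)^(1/(1-θ))`
(the supremum being expressed via upper bounds). -/
theorem stmt_13
    {H : Type*} [NormedAddCommGroup H] [InnerProductSpace ℝ H] [CompleteSpace H]
    (D' : Set H) (r : ℝ) (hr : 0 < r)
    (hball : Metric.ball (0 : H) r ⊆ convexHull ℝ D')
    (f : H → ℝ) (f' : H → H) (hdiff : ∀ x, HasGradientAt f (f' x) x)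
    (hconv : ConvexOn ℝ Set.univ f)
    (C θ : ℝ) (hC : 0 < C) (hθ : θ ∈ Set.Ioo (0 : ℝ) 1)
    (K : Set H) (hK : Bornology.IsBounded K)
    (hne : {z : H | ∀ y, f z ≤ f y}.Nonempty)
    (hsub : {z : H | ∀ y, f z ≤ f y} ⊆ interior K)
    (hsharp : ∀ w ∈ K, ∀ m ∈ {z : H | ∀ y, f z ≤ f y},
      Metric.infDist w {z : H | ∀ y, f z ≤ f y} ≤ C * (f w - f m) ^ θ)
    (x xs : H) (hxsmem : xs ∈ {z : H | ∀ y, f z ≤ f y})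
    (hxsproj : ∀ m ∈ {z : H | ∀ y, f z ≤ f y}, ⟪x - xs, m - xs⟫ ≤ 0)
    (hfx : f xs < f x)
    (ρ : ℝ) (hρ : ρ ∈ Set.Ioc (0 : ℝ) 1)
    (hmem : xs + ρ • (x - xs) ∈ K) :
    ∀ b : ℝ, (∀ z ∈ convexHull ℝ D', ⟪-f' x, z⟫ ≤ b) →
      f x - f xs ≤ 1 / ρ * (2 * C / r * b) ^ (1 / (1 - θ)) :=
  stmt_13_general D' r hr hball f f' hdiff hconv C θ hC hθ K hsharp x xs hxsmem hxsproj hfx ρ hρ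
    hmem
end

section
/- Let H be a real Hilbert space, let D′ ⊆ H be a set such that the open ball B(0, r) is contained in conv(D′) for some r > 0, let f : H → ℝ be Fréchet differentiable and S-strongly convex of order s = 2 (for some S > 0), and let x* be its global minimizer. Then for every x ∈ H with x ≠ x*, f(x) − f(x*) ≤ (2/(r²S)) · (inf_{z ∈ conv(D′)} ⟨∇f(x), z⟩)². -/
open RealInnerProductSpace

/-- If `B(0, r) ⊆ conv(D')`, `f` is Fréchet differentiable and `S`-strongly convex of order
`s = 2` with global minimizer `xs`, then for every `x ≠ xs`,
`f x - f xs ≤ (2/(r² S)) (inf_{z ∈ conv(D')} ⟪∇f x, z⟫)²`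
(the infimum being expressed via lower bounds). -/
theorem stmt_15
    {H : Type*} [NormedAddCommGroup H] [InnerProductSpace ℝ H] [CompleteSpace H]
    (D' : Set H) (r : ℝ) (hr : 0 < r)
    (hball : Metric.ball (0 : H) r ⊆ convexHull ℝ D')
    (f : H → ℝ) (f' : H → H) (hdiff : ∀ x, HasGradientAt f (f' x) x)
    (S : ℝ) (hS : 0 < S)
    (hsc : ∀ x y : H, S / 2 * ‖y - x‖ ^ 2 ≤ f y - f x - ⟪f' x, y - x⟫)
    (xs : H) (hxs : ∀ y, f xs ≤ f y) :
    ∀ x : H, x ≠ xs →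
      ∀ b : ℝ, (∀ z ∈ convexHull ℝ D', b ≤ ⟪f' x, z⟫) →
        f x - f xs ≤ 2 / (r ^ 2 * S) * b ^ 2 := by
  intro x _ b hb
  set g := f' x with hg
  -- Step 1: PL inequality  f x - f xs ≤ ‖g‖² / (2S)
  have hPL : f x - f xs ≤ ‖g‖ ^ 2 / (2 * S) := by
    have h1 := hsc x xs
    have hcs : -⟪g, xs - x⟫ ≤ ‖g‖ * ‖xs - x‖ := by
      have h := abs_real_inner_le_norm g (xs - x)
      have := neg_abs_le (⟪g, xs - x⟫ : ℝ)
      linarith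
    rw [le_div_iff₀ (by positivity : (0:ℝ) < 2 * S)]
    nlinarith [h1, hcs, sq_nonneg (‖g‖ - S * ‖xs - x‖), hS.le, sq_nonneg ‖xs - x‖]
  -- Step 2: b ≤ -(r * ‖g‖)
  have hb0 : b ≤ 0 := by
    have h0 : (0 : H) ∈ convexHull ℝ D' := hball (by simp [Metric.mem_ball, hr])
    have := hb 0 h0
    simpa using this
  have hbr : b ≤ -(r * ‖g‖) := by
    by_cases hgz : g = 0
    · simpa [hgz] using hb0
    · have hgn : 0 < ‖g‖ := norm_pos_iff.mpr hgz
      have key : ∀ t : ℝ, 0 ≤ t → t < r → b ≤ -(t * ‖g‖) := by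
        intro t ht htr
        have hz : (-(t / ‖g‖)) • g ∈ convexHull ℝ D' := by
          apply hball
          simp only [Metric.mem_ball, dist_zero_right, norm_smul, Real.norm_eq_abs]
          rw [abs_neg, abs_div, abs_of_nonneg ht, abs_of_nonneg hgn.le]
          rw [div_mul_cancel₀ _ (ne_of_gt hgn)]
          exact htr
        have := hb _ hz
        rw [real_inner_smul_right, real_inner_self_eq_norm_sq] at this
        have heq : -(t / ‖g‖) * ‖g‖ ^ 2 = -(t * ‖g‖) := by
          field_simp
        linarith [heq ▸ this]
      by_contra hcon
      push_neg at hcon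
      -- so -(r*‖g‖) < b; pick t between -b/‖g‖ and r
      have hlt : -b / ‖g‖ < r := by
        rw [div_lt_iff₀ hgn]; linarith
      set t := (max 0 (-b / ‖g‖) + r) / 2 with ht
      have ht0 : 0 ≤ t := by
        have := le_max_left 0 (-b / ‖g‖)
        have : (0:ℝ) ≤ max 0 (-b / ‖g‖) := le_max_left _ _
        positivity
      have htr : t < r := by
        have : max 0 (-b / ‖g‖) < r := max_lt hr hlt
        rw [ht]; linarith
      have hbt : b ≤ -(t * ‖g‖) := key t ht0 htr
      have htgt : -b / ‖g‖ < t := by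
        have h1 : -b / ‖g‖ ≤ max 0 (-b / ‖g‖) := le_max_right _ _
        have h2 : max 0 (-b / ‖g‖) < t := by
          rw [ht]
          have : max 0 (-b / ‖g‖) < r := max_lt hr hlt
          linarith
        linarith
      have : -b < t * ‖g‖ := by
        rw [div_lt_iff₀ hgn] at htgt; linarith
      linarith
  -- Step 3: combine
  have hsq : (r * ‖g‖) ^ 2 ≤ b ^ 2 := by
    have h1 : 0 ≤ r * ‖g‖ := by positivity
    nlinarith
  have hr2S : 0 < r ^ 2 * S := by positivity
  have key : ‖g‖ ^ 2 / (2 * S) ≤ 2 / (r ^ 2 * S) * b ^ 2 := by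
    rw [div_mul_eq_mul_div, div_le_div_iff₀ (by positivity) hr2S]
    nlinarith [hsq, hS.le, sq_nonneg b]
  linarith
end

section
/- Let H be a real Hilbert space, let D ⊆ H be a dictionary such that the open ball B(0, r) is contained in conv(D′) for some r > 0, and let f : H → ℝ be L-smooth of order ℓ = 2 and S-strongly convex of order s = 2 (for some L, S > 0) with global minimizer x*. Fix κ ≥ 1, η > 0, τ > 1 and let (x_t)_{t∈ℕ}, (φ_t)_{t∈ℕ} be a BMP trace with parameters (κ, η, τ) for f and D. Then for every ε > 0 and every integer t > N(ε) + (N(ε)+1)·M, one has f(x_t) − f(x*) ≤ ε, where M := τ²·max{κ², η²}·L·diam(D′)²/(r²·S) and N(ε) := max{0, ⌈(1/2)·log_τ(2φ_0²/(r²Sε))⌉} (with N(ε) := 0 when φ_0 = 0). Moreover, ‖x_t − x*‖² ≤ (2/S)·(f(x_t) − f(x*)) for all t, so x_t → x*. -/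
/-!
Write `h t = f (x t) - f x*`. A dual step certifies the gap: a lower bound `φ` for `⟪∇f, ·⟫` on
`conv D' ⊇ B(0, r)` gives `r ‖∇f‖ ≤ -φ`, hence `2 r² S h ≤ φ²` by the Polyak–Łojasiewicz
inequality. A full or constrained step with exact line search decreases `h` by at least
`φ² / (2 K L diam(D')²)`, `K = max(κ², η²)`. After `k` dual and `n` primal steps,
`2 K L diam(D')² h + n φ² ≤ (k + 1) M φ²`, so `n ≤ (k + 1) M`: once `t > N + (N + 1) M`,
`φ` has been divided by `τ` more than `N` times, which forces `h ≤ ε`. Since `∇f x* = 0`,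
strong convexity at `x*` gives `‖x t - x*‖² ≤ (2 / S) h t`.
-/

open RealInnerProductSpace Pointwise

/-- A BMP trace with parameters `(κ, η, τ)` for the objective `f` (with gradient `f'`) and
dictionary `D`: sequences of iterates `x` and dual gap estimates `φ` such that `φ 0 ≤ 0`,
`⟪∇f (x 0), z⟫ ≥ τ φ 0` on `conv (D ∪ -D)`, and each step is a constrained step, a dual step,
or a full step. -/
def IsBMPTrace {H : Type*} [NormedAddCommGroup H] [InnerProductSpace ℝ H]
    (f : H → ℝ) (f' : H → H) (D : Set H) (κ η τ : ℝ)
    (x : ℕ → H) (φ : ℕ → ℝ) : Prop :=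
  φ 0 ≤ 0 ∧
  (∀ z ∈ convexHull ℝ (D ∪ -D), τ * φ 0 ≤ ⟪f' (x 0), z⟫) ∧
  ∀ t : ℕ,
    -- constrained step
    (∃ (S : Finset H) (g : H), ↑S ⊆ D ∪ -D ∧
      (∃ v ∈ S, ⟪f' (x t), v⟫ ≤ φ t / η) ∧
      g ∈ Submodule.span ℝ (S : Set H) ∧
      (∀ w ∈ Submodule.span ℝ (S : Set H), ⟪g, w⟫ = ⟪f' (x t), w⟫) ∧
      (∃ γ : ℝ, x (t + 1) = x t - γ • g ∧ ∀ γ' : ℝ, f (x (t + 1)) ≤ f (x t - γ' • g)) ∧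
      φ (t + 1) = φ t) ∨
    -- dual step
    ((∀ z ∈ convexHull ℝ (D ∪ -D), φ t ≤ ⟪f' (x t), z⟫) ∧
      x (t + 1) = x t ∧ φ (t + 1) = φ t / τ) ∨
    -- full step
    (∃ v ∈ D ∪ -D, ⟪f' (x t), v⟫ ≤ φ t / κ ∧
      (∃ γ : ℝ, x (t + 1) = x t + γ • v ∧ ∀ γ' : ℝ, f (x (t + 1)) ≤ f (x t + γ' • v)) ∧
      φ (t + 1) = φ t)

open Filter Topology

section

variable {H : Type*} [NormedAddCommGroup H] [InnerProductSpace ℝ H]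
  {f : H → ℝ} {f' : H → H} {L S : ℝ}

theorem mul_norm_le_neg_of_ball_subset {C : Set H} {g : H} {r c : ℝ} (hr : 0 < r)
    (hball : Metric.ball (0 : H) r ⊆ C) (hc : ∀ z ∈ C, c ≤ ⟪g, z⟫) : r * ‖g‖ ≤ -c := by
  have hclosed : IsClosed {z : H | c ≤ ⟪g, z⟫} :=
    isClosed_le continuous_const (continuous_const.inner continuous_id)
  have hcball : Metric.closedBall (0 : H) r ⊆ {z | c ≤ ⟪g, z⟫} := by
    rw [← closure_ball (0 : H) hr.ne']
    exact closure_minimal (fun z hz => hc z (hball hz)) hclosed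
  rcases eq_or_ne g 0 with rfl | hg
  · simpa using hcball (Metric.mem_closedBall_self hr.le)
  have hng : 0 < ‖g‖ := norm_pos_iff.mpr hg
  have hz : -(r / ‖g‖) • g ∈ Metric.closedBall (0 : H) r := by
    rw [mem_closedBall_zero_iff, norm_smul, norm_neg, Real.norm_of_nonneg (by positivity),
      div_mul_cancel₀ r hng.ne']
  have := hcball hz
  simp only [Set.mem_ofPred_eq, real_inner_smul_right, real_inner_self_eq_norm_sq] at this
  field_simp at this
  linarith

theorem polyak_lojasiewicz_of_strongly_convex {z : H} (hS : 0 < S)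
    (hsc : ∀ y, S / 2 * ‖y - z‖ ^ 2 ≤ f y - f z - ⟪f' z, y - z⟫) (y : H) :
    2 * S * (f z - f y) ≤ ‖f' z‖ ^ 2 := by
  have hcs := real_inner_le_norm (f' z) (z - y)
  rw [← neg_sub y z, inner_neg_right, norm_neg] at hcs
  nlinarith [hsc y, sq_nonneg (‖f' z‖ - S * ‖y - z‖)]

theorem line_search_descent {z v w : H} (hL : 0 < L)
    (hsmooth : ∀ y, f y - f z - ⟪f' z, y - z⟫ ≤ L / 2 * ‖y - z‖ ^ 2)
    (hls : ∀ γ : ℝ, f w ≤ f (z + γ • v)) :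
    2 * L * ‖v‖ ^ 2 * (f w - f z) ≤ -⟪f' z, v⟫ ^ 2 := by
  rcases eq_or_ne v 0 with rfl | hv
  · simp
  have hnv : 0 < ‖v‖ := norm_pos_iff.mpr hv
  -- the minimizer of the quadratic upper bound `γ ↦ γ ⟪f' z, v⟫ + L/2 γ² ‖v‖²`
  set γ := -⟪f' z, v⟫ / (L * ‖v‖ ^ 2)
  have hstep := hsmooth (z + γ • v)
  rw [add_sub_cancel_left, real_inner_smul_right, norm_smul, mul_pow, Real.norm_eq_abs,
    sq_abs] at hstep
  have hquad : 2 * L * ‖v‖ ^ 2 * (γ * ⟪f' z, v⟫ + L / 2 * (γ ^ 2 * ‖v‖ ^ 2)) = -⟪f' z, v⟫ ^ 2 := by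
    simp only [γ]
    field_simp
    ring
  rw [← hquad]
  have := hls γ
  gcongr
  linarith

theorem grad_eq_zero_of_forall_le {xs : H} (hL : 0 < L)
    (hsmooth : ∀ y, f y - f xs - ⟪f' xs, y - xs⟫ ≤ L / 2 * ‖y - xs‖ ^ 2)
    (hxs : ∀ y, f xs ≤ f y) : f' xs = 0 := by
  have h := line_search_descent (v := f' xs) hL hsmooth (fun γ => hxs _)
  rw [sub_self, mul_zero, real_inner_self_eq_norm_sq] at h
  have hsq : (‖f' xs‖ ^ 2) ^ 2 = 0 := by linarith [sq_nonneg (‖f' xs‖ ^ 2)]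
  simpa using hsq

theorem quadratic_growth {xs : H} (hS : 0 < S)
    (hsc : ∀ y, S / 2 * ‖y - xs‖ ^ 2 ≤ f y - f xs - ⟪f' xs, y - xs⟫) (hgrad : f' xs = 0)
    (y : H) : ‖y - xs‖ ^ 2 ≤ 2 / S * (f y - f xs) := by
  have := hsc y
  rw [hgrad, inner_zero_left, sub_zero] at this
  rw [div_mul_eq_mul_div, le_div_iff₀ hS]
  linarith

theorem gap_le_of_forall_le_inner {C : Set H} {z : H} {r c : ℝ} (hr : 0 < r)
    (hball : Metric.ball (0 : H) r ⊆ C) (hc : ∀ u ∈ C, c ≤ ⟪f' z, u⟫) (hS : 0 < S)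
    (hsc : ∀ y, S / 2 * ‖y - z‖ ^ 2 ≤ f y - f z - ⟪f' z, y - z⟫) (y : H) :
    2 * (r ^ 2 * S) * (f z - f y) ≤ c ^ 2 := by
  have hnorm := mul_norm_le_neg_of_ball_subset hr hball hc
  have hpl := polyak_lojasiewicz_of_strongly_convex hS hsc y
  calc 2 * (r ^ 2 * S) * (f z - f y) = r ^ 2 * (2 * S * (f z - f y)) := by ring
    _ ≤ (r * ‖f' z‖) ^ 2 := by rw [mul_pow]; gcongr
    _ ≤ c ^ 2 := by
      have := mul_nonneg hr.le (norm_nonneg (f' z))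
      nlinarith

theorem descent_of_inner_le_div {z v w : H} {d φ q : ℝ} (hL : 0 < L)
    (hsmooth : ∀ y, f y - f z - ⟪f' z, y - z⟫ ≤ L / 2 * ‖y - z‖ ^ 2)
    (hls : ∀ γ : ℝ, f w ≤ f (z + γ • v)) (hv : ‖v‖ ≤ d) (hφ : φ ≤ 0) (hq : 0 < q)
    (hvφ : ⟪f' z, v⟫ ≤ φ / q) :
    2 * (q ^ 2 * L * d ^ 2) * (f w - f z) ≤ -φ ^ 2 := by
  have hdesc := line_search_descent hL hsmooth hls
  have hdec : f w - f z ≤ 0 := by simpa using hls 0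
  have hφv : -φ ≤ q * -⟪f' z, v⟫ := by rw [le_div_iff₀ hq] at hvφ; linarith
  have hφv2 : φ ^ 2 ≤ q ^ 2 * ⟪f' z, v⟫ ^ 2 := by nlinarith
  have hvd : ‖v‖ ^ 2 ≤ d ^ 2 := pow_le_pow_left₀ (norm_nonneg v) hv 2
  calc 2 * (q ^ 2 * L * d ^ 2) * (f w - f z)
      ≤ q ^ 2 * (2 * L * ‖v‖ ^ 2 * (f w - f z)) := by
        have := mul_le_mul_of_nonpos_right hvd hdec
        have hqL : 0 ≤ 2 * q ^ 2 * L := by positivity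
        nlinarith
    _ ≤ q ^ 2 * -⟪f' z, v⟫ ^ 2 := by gcongr
    _ ≤ -φ ^ 2 := by linarith

theorem descent_of_projection {z g v w : H} {d φ q : ℝ} (hL : 0 < L)
    (hsmooth : ∀ y, f y - f z - ⟪f' z, y - z⟫ ≤ L / 2 * ‖y - z‖ ^ 2)
    (hls : ∀ γ : ℝ, f w ≤ f (z - γ • g)) (hgg : ⟪f' z, g⟫ = ‖g‖ ^ 2)
    (hgv : ⟪g, v⟫ = ⟪f' z, v⟫) (hv : ‖v‖ ≤ d) (hφ : φ ≤ 0) (hq : 0 < q)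
    (hvφ : ⟪f' z, v⟫ ≤ φ / q) :
    2 * (q ^ 2 * L * d ^ 2) * (f w - f z) ≤ -φ ^ 2 := by
  have hdec : f w - f z ≤ 0 := by simpa using hls 0
  have hdesc : 2 * L * (f w - f z) ≤ -‖g‖ ^ 2 := by
    have h := line_search_descent (v := g) hL hsmooth fun γ => by
      simpa [sub_eq_add_neg] using hls (-γ)
    rw [hgg] at h
    rcases eq_or_ne g 0 with rfl | hg
    · simpa using mul_nonpos_of_nonneg_of_nonpos (by positivity : (0 : ℝ) ≤ 2 * L) hdec
    have hg2 : 0 < ‖g‖ ^ 2 := by positivity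
    nlinarith
  have hφg : -φ ≤ q * (‖g‖ * d) := by
    have hcs := real_inner_le_norm g (-v)
    rw [inner_neg_right, hgv, norm_neg] at hcs
    rw [le_div_iff₀ hq] at hvφ
    nlinarith [mul_le_mul_of_nonneg_left hv (norm_nonneg g)]
  have hφg2 : φ ^ 2 ≤ q ^ 2 * (‖g‖ ^ 2 * d ^ 2) := by nlinarith
  calc 2 * (q ^ 2 * L * d ^ 2) * (f w - f z) = q ^ 2 * d ^ 2 * (2 * L * (f w - f z)) := by ring
    _ ≤ q ^ 2 * d ^ 2 * -‖g‖ ^ 2 := by gcongr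
    _ ≤ -φ ^ 2 := by linarith

theorem norm_le_diam_union_neg {D : Set H} (hD : Bornology.IsBounded D) {v : H}
    (hv : v ∈ D ∪ -D) : ‖v‖ ≤ Metric.diam (D ∪ -D) := by
  have hnv : -v ∈ D ∪ -D := by
    rcases hv with hv | hv
    · exact Or.inr (by simpa using hv)
    · exact Or.inl hv
  have h := Metric.dist_le_diam_of_mem (hD.union hD.neg) hv hnv
  rw [dist_eq_norm, sub_neg_eq_add, ← two_smul ℝ v, norm_smul, Real.norm_two] at h
  linarith [norm_nonneg v]

end

/-- The recursion satisfied by the gap `h t = f (x t) - f x*` and the dual estimate `φ` of a BMP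
trace, with `a = r² S` and `c = K L diam(D')²`: each step is dual (`φ` shrinks by `τ` and certifies
the gap) or primal (`φ` is kept and the gap drops by `φ² / (2c)`). -/
def BMPGapSteps (a c τ : ℝ) (h φ : ℕ → ℝ) : Prop :=
  ∀ t, h (t + 1) ≤ h t ∧
    ((φ (t + 1) = φ t / τ ∧ 2 * a * h t ≤ φ t ^ 2) ∨
      (φ (t + 1) = φ t ∧ 2 * c * (h (t + 1) - h t) ≤ -φ t ^ 2))

namespace BMPGapSteps

variable {a c τ : ℝ} {h φ : ℕ → ℝ}

theorem phi_eq_zero (hs : BMPGapSteps a c τ h φ) (h0 : φ 0 = 0) (t : ℕ) : φ t = 0 := by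
  induction t with
  | zero => exact h0
  | succ t ih => rcases (hs t).2 with ⟨hφ, -⟩ | ⟨hφ, -⟩ <;> simp [hφ, ih]

theorem gap_le (hs : BMPGapSteps a c τ h φ) (ha : 0 ≤ a) (hτ : τ ≠ 0)
    (h0 : 2 * a * h 0 ≤ τ ^ 2 * φ 0 ^ 2) (t : ℕ) : 2 * a * h t ≤ τ ^ 2 * φ t ^ 2 := by
  induction t with
  | zero => exact h0
  | succ t ih =>
    obtain ⟨hdec, ⟨hφ, hdual⟩ | ⟨hφ, -⟩⟩ := hs t
    · rw [hφ, div_pow, mul_div_cancel₀ _ (pow_ne_zero 2 hτ)]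
      nlinarith
    · rw [hφ]
      nlinarith

/-- `k` counts the dual steps and `n` the primal steps among the first `t`. -/
theorem exists_count (hs : BMPGapSteps a c τ h φ) (ha : 0 < a) (hc : 0 ≤ c) (hτ : τ ≠ 0)
    (hh : ∀ t, 0 ≤ h t) (h0 : 2 * a * h 0 ≤ τ ^ 2 * φ 0 ^ 2) (t : ℕ) :
    ∃ k n : ℕ, t = k + n ∧ φ t = φ 0 / τ ^ k ∧
      2 * c * h t + n * φ t ^ 2 ≤ (k + 1) * (τ ^ 2 * c / a) * φ t ^ 2 := by
  have hM : ∀ t, 2 * c * h t ≤ τ ^ 2 * c / a * φ t ^ 2 := fun t => calc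
    2 * c * h t = c / a * (2 * a * h t) := by field_simp
    _ ≤ c / a * (τ ^ 2 * φ t ^ 2) :=
      mul_le_mul_of_nonneg_left (hs.gap_le ha.le hτ h0 t) (div_nonneg hc ha.le)
    _ = τ ^ 2 * c / a * φ t ^ 2 := by ring
  induction t with
  | zero => exact ⟨0, 0, rfl, by simp, by simpa using hM 0⟩
  | succ t ih =>
    obtain ⟨k, n, rfl, hφk, hcount⟩ := ih
    obtain ⟨-, ⟨hφ, -⟩ | ⟨hφ, hprimal⟩⟩ := hs (k + n)
    · refine ⟨k + 1, n, by ring, by rw [hφ, hφk, pow_succ, div_div], ?_⟩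
      have hτ2 : 0 < τ ^ 2 := by positivity
      have hcount' : n * φ (k + n + 1) ^ 2 ≤ (k + 1) * (τ ^ 2 * c / a) * φ (k + n + 1) ^ 2 := by
        rw [hφ, div_pow, ← mul_div_assoc, ← mul_div_assoc, div_le_div_iff_of_pos_right hτ2]
        nlinarith [mul_nonneg hc (hh (k + n))]
      push_cast
      nlinarith [hM (k + n + 1)]
    · refine ⟨k, n + 1, by ring, by rw [hφ, hφk], ?_⟩
      rw [hφ]
      push_cast
      nlinarith

theorem gap_le_of_lt (hs : BMPGapSteps a c τ h φ) (ha : 0 < a) (hc : 0 ≤ c) (hτ : 1 < τ)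
    (hh : ∀ t, 0 ≤ h t) (h0 : 2 * a * h 0 ≤ τ ^ 2 * φ 0 ^ 2) {ε : ℝ} (hε : 0 < ε) {N : ℝ}
    (hN : N = ((max 0 ⌈(1 / 2 : ℝ) * (Real.log (2 * φ 0 ^ 2 / (a * ε)) / Real.log τ)⌉ : ℤ) : ℝ))
    {t : ℕ} (ht : N + (N + 1) * (τ ^ 2 * c / a) < t) : h t ≤ ε := by
  have hτ0 : τ ≠ 0 := by positivity
  have hA := hs.gap_le ha.le hτ0 h0 t
  rcases eq_or_ne (φ 0) 0 with hφ0 | hφ0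
  · rw [hs.phi_eq_zero hφ0] at hA
    nlinarith [hh t]
  set X := 2 * φ 0 ^ 2 / (a * ε)
  have hX : X ≤ τ ^ (2 * N) := by
    rw [← Real.logb_le_iff_le_rpow hτ (by positivity), Real.logb]
    have : (1 / 2 : ℝ) * (Real.log X / Real.log τ) ≤ N :=
      hN ▸ (Int.le_ceil _).trans (by exact_mod_cast le_max_right _ _)
    linarith
  obtain ⟨m, rfl⟩ : ∃ m : ℤ, N = m := ⟨_, hN⟩
  obtain ⟨k, n, rfl, hφk, hcount⟩ := hs.exists_count ha hc hτ0 hh h0 t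
  set M := τ ^ 2 * c / a
  have hφt : 0 < φ (k + n) ^ 2 := by rw [hφk]; positivity
  have hn : (n : ℝ) ≤ (k + 1) * M := by nlinarith [mul_nonneg hc (hh (k + n))]
  have hkm : (m : ℝ) + 1 ≤ k := by
    have hmk : (m : ℝ) < k := by
      -- otherwise `t = k + n ≤ m + (m + 1) M`
      by_contra! hk
      push_cast at ht
      nlinarith [mul_le_mul_of_nonneg_right hk (by positivity : 0 ≤ M)]
    exact_mod_cast Int.add_one_le_of_lt (by exact_mod_cast hmk)
  have hpow : X * τ ^ 2 ≤ τ ^ (2 * k) := by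
    calc X * τ ^ 2 ≤ τ ^ (2 * (m : ℝ)) * τ ^ (2 : ℝ) := by
          rw [Real.rpow_two]; gcongr
      _ = τ ^ (2 * (m : ℝ) + 2) := (Real.rpow_add (by positivity) _ _).symm
      _ ≤ τ ^ ((2 * k : ℕ) : ℝ) := by
          apply Real.rpow_le_rpow_of_exponent_le hτ.le; push_cast; linarith
      _ = τ ^ (2 * k) := Real.rpow_natCast _ _
  have hφt0 : φ (k + n) ^ 2 * τ ^ (2 * k) = φ 0 ^ 2 := by
    rw [hφk, div_pow, ← pow_mul, mul_comm k 2]; field_simp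
  have hgap : 2 * a * h (k + n) * (X * τ ^ 2) ≤ τ ^ 2 * φ 0 ^ 2 := calc
    _ ≤ 2 * a * h (k + n) * τ ^ (2 * k) :=
      mul_le_mul_of_nonneg_left hpow (mul_nonneg (by positivity) (hh _))
    _ ≤ τ ^ 2 * φ (k + n) ^ 2 * τ ^ (2 * k) := by gcongr
    _ = τ ^ 2 * φ 0 ^ 2 := by rw [mul_assoc, hφt0]
  have hX' : 2 * a * h (k + n) * (X * τ ^ 2) = 4 / ε * h (k + n) * (τ ^ 2 * φ 0 ^ 2) := by
    simp only [X]; field_simp; ring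
  rw [hX', mul_le_iff_le_one_left (by positivity), div_mul_eq_mul_div, div_le_one hε] at hgap
  linarith [hh (k + n)]

theorem tendsto_zero (hs : BMPGapSteps a c τ h φ) (ha : 0 < a) (hc : 0 ≤ c) (hτ : 1 < τ)
    (hh : ∀ t, 0 ≤ h t) (h0 : 2 * a * h 0 ≤ τ ^ 2 * φ 0 ^ 2) : Tendsto h atTop (𝓝 0) := by
  refine tendsto_order.2 ⟨fun b hb => .of_forall fun t => hb.trans_le (hh t), fun b hb => ?_⟩
  set N := ((max 0 ⌈(1 / 2 : ℝ) * (Real.log (2 * φ 0 ^ 2 / (a * (b / 2))) / Real.log τ)⌉ : ℤ) : ℝ)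
  filter_upwards [tendsto_natCast_atTop_atTop.eventually_gt_atTop (N + (N + 1) * (τ ^ 2 * c / a))]
    with t ht
  linarith [hs.gap_le_of_lt ha hc hτ hh h0 (half_pos hb) rfl ht]

end BMPGapSteps

theorem tendsto_of_sq_norm_sub_le {E : Type*} [SeminormedAddCommGroup E] {x : ℕ → E} {y : E}
    {e : ℕ → ℝ} (he : Tendsto e atTop (𝓝 0)) (hx : ∀ t, ‖x t - y‖ ^ 2 ≤ e t) :
    Tendsto x atTop (𝓝 y) := by
  rw [tendsto_iff_norm_sub_tendsto_zero]
  refine squeeze_zero (fun t => norm_nonneg _) (fun t => Real.le_sqrt_of_sq_le (hx t)) ?_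
  simpa using he.sqrt

namespace IsBMPTrace

variable {H : Type*} [NormedAddCommGroup H] [InnerProductSpace ℝ H] {f : H → ℝ} {f' : H → H}
  {D : Set H} {κ η τ : ℝ} {x : ℕ → H} {φ : ℕ → ℝ}

theorem phi_nonpos (htrace : IsBMPTrace f f' D κ η τ x φ) (hτ : 0 ≤ τ) (t : ℕ) : φ t ≤ 0 := by
  obtain ⟨hφ0, -, hstep⟩ := htrace
  induction t with
  | zero => exact hφ0
  | succ t ih =>
    rcases hstep t with ⟨-, -, -, -, -, -, -, hφ⟩ | ⟨-, -, hφ⟩ | ⟨-, -, -, -, hφ⟩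
    · rwa [hφ]
    · rw [hφ]; exact div_nonpos_of_nonpos_of_nonneg ih hτ
    · rwa [hφ]

theorem bmpGapSteps (htrace : IsBMPTrace f f' D κ η τ x φ) (hD : Bornology.IsBounded D)
    {r : ℝ} (hr : 0 < r) (hball : Metric.ball (0 : H) r ⊆ convexHull ℝ (D ∪ -D))
    {L S : ℝ} (hL : 0 < L) (hS : 0 < S)
    (hsmooth : ∀ z y : H, f y - f z - ⟪f' z, y - z⟫ ≤ L / 2 * ‖y - z‖ ^ 2)
    (hsc : ∀ z y : H, S / 2 * ‖y - z‖ ^ 2 ≤ f y - f z - ⟪f' z, y - z⟫)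
    (hκ : 1 ≤ κ) (hη : 0 < η) (hτ : 0 ≤ τ) (xs : H) :
    BMPGapSteps (r ^ 2 * S) (max (κ ^ 2) (η ^ 2) * L * Metric.diam (D ∪ -D) ^ 2) τ
      (fun t => f (x t) - f xs) φ := by
  intro t
  have hφ := htrace.phi_nonpos hτ t
  set K := max (κ ^ 2) (η ^ 2)
  set d := Metric.diam (D ∪ -D)
  have hmono : ∀ {q Δ : ℝ}, q ^ 2 ≤ K → Δ ≤ 0 → 2 * (q ^ 2 * L * d ^ 2) * Δ ≤ -φ t ^ 2 →
      2 * (K * L * d ^ 2) * Δ ≤ -φ t ^ 2 := fun hqK hΔ h => by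
    nlinarith [mul_le_mul_of_nonneg_right hqK (by positivity : 0 ≤ L * d ^ 2)]
  obtain ⟨-, -, hstep⟩ := htrace
  rcases hstep t with
    ⟨T, g, hTD, ⟨v, hvT, hvφ⟩, hg, hproj, ⟨γ, hx, hls⟩, hφ1⟩ | ⟨hcert, hx, hφ1⟩ |
      ⟨v, hvD, hvφ, ⟨γ, hx, hls⟩, hφ1⟩
  · have hdec : f (x (t + 1)) ≤ f (x t) := by simpa using hls 0
    refine ⟨sub_le_sub_right hdec _, .inr ⟨hφ1, ?_⟩⟩
    rw [sub_sub_sub_cancel_right]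
    refine hmono (le_max_right _ _) (by linarith) (descent_of_projection hL (hsmooth _) hls ?_
      (hproj v (Submodule.subset_span hvT)) (norm_le_diam_union_neg hD (hTD hvT)) hφ hη hvφ)
    rw [← hproj g hg, real_inner_self_eq_norm_sq]
  · exact ⟨by simp [hx], .inl ⟨hφ1, gap_le_of_forall_le_inner hr hball hcert hS (hsc _) xs⟩⟩
  · have hdec : f (x (t + 1)) ≤ f (x t) := by simpa using hls 0
    refine ⟨sub_le_sub_right hdec _, .inr ⟨hφ1, ?_⟩⟩
    rw [sub_sub_sub_cancel_right]
    exact hmono (le_max_left _ _) (by linarith) (descent_of_inner_le_div hL (hsmooth _) hls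
      (norm_le_diam_union_neg hD hvD) hφ (by linarith) hvφ)

end IsBMPTrace

theorem stmt_17_general
    {H : Type*} [NormedAddCommGroup H] [InnerProductSpace ℝ H]
    (D : Set H) (hDbdd : Bornology.IsBounded D)
    (r : ℝ) (hr : 0 < r) (hball : Metric.ball (0 : H) r ⊆ convexHull ℝ (D ∪ -D))
    (f : H → ℝ) (f' : H → H)
    (L S : ℝ) (hL : 0 < L) (hS : 0 < S)
    (hsmooth : ∀ z y : H, f y - f z - ⟪f' z, y - z⟫ ≤ L / 2 * ‖y - z‖ ^ 2)
    (hsc : ∀ z y : H, S / 2 * ‖y - z‖ ^ 2 ≤ f y - f z - ⟪f' z, y - z⟫)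
    (xs : H) (hxs : ∀ y, f xs ≤ f y)
    (κ η τ : ℝ) (hκ : 1 ≤ κ) (hη : 0 < η) (hτ : 1 < τ)
    (x : ℕ → H) (φ : ℕ → ℝ) (htrace : IsBMPTrace f f' D κ η τ x φ) :
    (∀ ε : ℝ, 0 < ε → ∀ N M : ℝ,
      N = ((max 0 ⌈(1 / 2 : ℝ) * (Real.log (2 * φ 0 ^ 2 / (r ^ 2 * S * ε)) / Real.log τ)⌉ : ℤ) : ℝ) →
      M = τ ^ 2 * max (κ ^ 2) (η ^ 2) * L * Metric.diam (D ∪ -D) ^ 2 / (r ^ 2 * S) →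
      ∀ t : ℕ, N + (N + 1) * M < (t : ℝ) →
      f (x t) - f xs ≤ ε) ∧
    (∀ t : ℕ, ‖x t - xs‖ ^ 2 ≤ 2 / S * (f (x t) - f xs)) ∧
    Filter.Tendsto x Filter.atTop (nhds xs) := by
  have hsteps := htrace.bmpGapSteps hDbdd hr hball hL hS hsmooth hsc hκ hη (by positivity) xs
  have hgap : ∀ t, 0 ≤ f (x t) - f xs := fun t => sub_nonneg.2 (hxs _)
  have hc : 0 ≤ max (κ ^ 2) (η ^ 2) * L * Metric.diam (D ∪ -D) ^ 2 := by positivity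
  have h0 : 2 * (r ^ 2 * S) * (f (x 0) - f xs) ≤ τ ^ 2 * φ 0 ^ 2 := by
    simpa [mul_pow] using gap_le_of_forall_le_inner hr hball htrace.2.1 hS (hsc _) xs
  have hquad := quadratic_growth hS (hsc xs) (grad_eq_zero_of_forall_le hL (hsmooth xs) hxs)
  refine ⟨fun ε hε N M hN hM t ht => ?_, fun t => hquad (x t), ?_⟩
  · refine hsteps.gap_le_of_lt (by positivity) hc hτ hgap h0 hε hN ?_
    rw [hM] at ht
    convert ht using 3
    ring
  · refine tendsto_of_sq_norm_sub_le ?_ fun t => hquad (x t)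
    simpa using (hsteps.tendsto_zero (by positivity) hc hτ hgap h0).const_mul (2 / S)

/-- Linear convergence of BMP for `L`-smooth, `S`-strongly convex objectives of orders
`ℓ = s = 2`: with `M = τ² max(κ², η²) L diam(D')²/(r² S)` and
`N(ε) = max 0 ⌈(1/2) log_τ (2 φ₀²/(r² S ε))⌉`, every `t > N(ε) + (N(ε)+1) M` satisfies
`f (x t) - f x* ≤ ε`; moreover `‖x t - x*‖² ≤ (2/S)(f (x t) - f x*)`, so `x t → x*`. -/
theorem stmt_17
    {H : Type*} [NormedAddCommGroup H] [InnerProductSpace ℝ H] [CompleteSpace H]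
    (D : Set H) (hDne : D.Nonempty) (hDbdd : Bornology.IsBounded D)
    (r : ℝ) (hr : 0 < r) (hball : Metric.ball (0 : H) r ⊆ convexHull ℝ (D ∪ -D))
    (f : H → ℝ) (f' : H → H) (hdiff : ∀ z, HasGradientAt f (f' z) z)
    (L S : ℝ) (hL : 0 < L) (hS : 0 < S)
    (hsmooth : ∀ z y : H, f y - f z - ⟪f' z, y - z⟫ ≤ L / 2 * ‖y - z‖ ^ 2)
    (hsc : ∀ z y : H, S / 2 * ‖y - z‖ ^ 2 ≤ f y - f z - ⟪f' z, y - z⟫)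
    (xs : H) (hxs : ∀ y, f xs ≤ f y)
    (κ η τ : ℝ) (hκ : 1 ≤ κ) (hη : 0 < η) (hτ : 1 < τ)
    (x : ℕ → H) (φ : ℕ → ℝ) (htrace : IsBMPTrace f f' D κ η τ x φ) :
    (∀ ε : ℝ, 0 < ε → ∀ N M : ℝ,
      N = ((max 0 ⌈(1 / 2 : ℝ) * (Real.log (2 * φ 0 ^ 2 / (r ^ 2 * S * ε)) / Real.log τ)⌉ : ℤ) : ℝ) →
      M = τ ^ 2 * max (κ ^ 2) (η ^ 2) * L * Metric.diam (D ∪ -D) ^ 2 / (r ^ 2 * S) →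
      ∀ t : ℕ, N + (N + 1) * M < (t : ℝ) →
      f (x t) - f xs ≤ ε) ∧
    (∀ t : ℕ, ‖x t - xs‖ ^ 2 ≤ 2 / S * (f (x t) - f xs)) ∧
    Filter.Tendsto x Filter.atTop (nhds xs) :=
  stmt_17_general D hDbdd r hr hball f f' L S hL hS hsmooth hsc xs hxs κ η τ hκ hη hτ x φ htrace
end

section
/- Let H be a real Hilbert space, let D ⊆ H be a dictionary such that the open ball B(0, r) is contained in conv(D′) for some r > 0, and let f : H → ℝ be L-smooth of order ℓ > 1 (for some L > 0), convex, and coercive. Fix κ ≥ 1, η > 0, τ > 1 and let (x_t)_{t∈ℕ}, (φ_t)_{t∈ℕ} be a BMP trace with parameters (κ, η, τ) for f and D. Then f attains its minimum on H, and there exists a constant A > 0 (depending on f, D, r, κ, η, τ, and the trace) such that for every ε > 0 and every integer t ≥ A·(1 + ε^{−1/(ℓ−1)}), one has f(x_t) − min_H f ≤ ε. -/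
/-!
Write `p = 1 / (ℓ - 1)` and `u t = -φ t`. A dual step certifies `⟪∇f (x t), z⟫ ≥ φ t` on
`conv (D ∪ -D) ⊇ B(0, r)`, hence `‖∇f (x t)‖ ≤ u t / r`; since the iterates stay in a bounded
sublevel set, convexity turns this into the invariant `f (x t) - min f ≤ G * u t`. Every other
step is an exact line search along a direction of slope `≤ -c * u t`, so `ℓ`-smoothness yields
the decrease `C * u t ^ (p + 1)`. The potential `t + (f (x t) - min f) / (C * u t ^ (p + 1))`
is therefore bounded by `a * u t ^ (-p)` (the dual steps multiply `u ^ (-p)` by `τ ^ p > 1`),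
and `t ≤ a * u t ^ (-p)` together with `f (x t) - min f ≤ G * u t` is the claimed rate.

The minimiser exists because the least-norm points of the nested sublevel sets of `f` form a
Cauchy sequence.
-/

open RealInnerProductSpace Pointwise

open Set Filter

theorem exists_norm_lt_of_coercive {E : Type*} [Norm E] {f : E → ℝ}
    (hcoer : ∀ M, ∃ R, ∀ z : E, R ≤ ‖z‖ → M ≤ f z) (c : ℝ) : ∃ R, ∀ z, f z ≤ c → ‖z‖ < R := by
  obtain ⟨R, hR⟩ := hcoer (c + 1)
  exact ⟨R, fun z hz => lt_of_not_ge fun h => by linarith [hR z h]⟩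

section NormedSpace

variable {E : Type*} [NormedAddCommGroup E] [NormedSpace ℝ E]

theorem ConvexOn.le_sub_of_hasFDerivAt {f : E → ℝ} {f' : E →L[ℝ] ℝ} {x : E}
    (hf : ConvexOn ℝ univ f) (hx : HasFDerivAt f f' x) (y : E) : f' (y - x) ≤ f y - f x := by
  have hline : HasDerivAt (f ∘ AffineMap.lineMap (k := ℝ) x y) (f' (y - x)) 0 := by
    refine HasFDerivAt.comp_hasDerivAt (0 : ℝ) ?_ AffineMap.hasDerivAt_lineMap
    simpa using hx
  have hconv : ConvexOn ℝ univ (f ∘ AffineMap.lineMap (k := ℝ) x y) :=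
    hf.comp_affineMap (AffineMap.lineMap x y)
  simpa [slope_def_field] using
    hconv.le_slope_of_hasDerivAt (mem_univ 0) (mem_univ 1) one_pos hline

theorem ConvexOn.bddBelow_of_coercive {f : E → ℝ} (hconv : ConvexOn ℝ univ f)
    (hdiff : Differentiable ℝ f) (hcoer : ∀ M, ∃ R, ∀ z : E, R ≤ ‖z‖ → M ≤ f z) :
    BddBelow (range f) := by
  obtain ⟨R, hR⟩ := hcoer (f 0)
  refine ⟨min (f 0) (f 0 - ‖fderiv ℝ f 0‖ * R), forall_mem_range.2 fun z => ?_⟩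
  rcases le_or_gt R ‖z‖ with hz | hz
  · exact (min_le_left _ _).trans (hR z hz)
  · have hgrad := hconv.le_sub_of_hasFDerivAt (hdiff 0).hasFDerivAt z
    have hop : |fderiv ℝ f 0 z| ≤ ‖fderiv ℝ f 0‖ * R :=
      ((fderiv ℝ f 0).le_opNorm z).trans (by gcongr)
    rw [sub_zero] at hgrad
    exact (min_le_right _ _).trans (by linarith [neg_abs_le (fderiv ℝ f 0 z)])

end NormedSpace

section InnerProductSpace

variable {H : Type*} [NormedAddCommGroup H] [InnerProductSpace ℝ H]

theorem ConvexOn.sub_le_inner_of_hasGradientAt [CompleteSpace H] {f : H → ℝ} {g x : H}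
    (hf : ConvexOn ℝ univ f) (hx : HasGradientAt f g x) (y : H) :
    f x - f y ≤ ⟪g, x - y⟫ := by
  have := hf.le_sub_of_hasFDerivAt hx.hasFDerivAt y
  rw [InnerProductSpace.toDual_apply_apply, ← neg_sub x y, inner_neg_right] at this
  linarith

theorem mul_norm_le_neg_of_forall_mem_ball {g : H} {r c : ℝ} (hr : 0 < r)
    (hc : ∀ z ∈ Metric.ball (0 : H) r, c ≤ ⟪g, z⟫) : r * ‖g‖ ≤ -c := by
  have hc0 : c ≤ 0 := by simpa using hc 0 (Metric.mem_ball_self hr)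
  rcases eq_or_ne g 0 with rfl | hg
  · simpa using hc0
  have hgpos : 0 < ‖g‖ := norm_pos_iff.2 hg
  rw [← le_div_iff₀ hgpos]
  refine le_of_forall_lt_imp_le_of_dense fun s hs => ?_
  rcases le_or_gt s 0 with hs0 | hs0
  · exact hs0.trans (div_nonneg (neg_nonneg.2 hc0) hgpos.le)
  have hz : -((s / ‖g‖) • g) ∈ Metric.ball (0 : H) r := by
    rw [mem_ball_zero_iff, norm_neg, norm_smul, Real.norm_of_nonneg (by positivity),
      div_mul_cancel₀ _ hgpos.ne']
    exact hs
  have := hc _ hz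
  rw [inner_neg_right, real_inner_smul_right, real_inner_self_eq_norm_sq] at this
  have hsg : s / ‖g‖ * ‖g‖ ^ 2 = s * ‖g‖ := by field_simp
  rw [le_div_iff₀ hgpos]
  linarith

theorem nonempty_iInter_of_antitone_of_isClosed_of_convex [CompleteSpace H] {K : ℕ → Set H}
    (hanti : Antitone K) (hne : ∀ n, (K n).Nonempty) (hclosed : ∀ n, IsClosed (K n))
    (hconv : ∀ n, Convex ℝ (K n)) (hbdd : Bornology.IsBounded (K 0)) :
    (⋂ n, K n).Nonempty := by
  choose y hyK hymin using fun n =>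
    exists_norm_eq_iInf_of_complete_convex (hne n) (hclosed n).isComplete (hconv n) 0
  -- `y n` is the least-norm point of `K n`; the variational inequality of this projection
  -- gives the step bound.
  have hstep : ∀ n m, n ≤ m → ‖y m - y n‖ ^ 2 ≤ ‖y m‖ ^ 2 - ‖y n‖ ^ 2 := by
    intro n m hnm
    have hvar := (norm_eq_iInf_iff_real_inner_le_zero (hconv n) (hyK n)).1 (hymin n) (y m)
      (hanti hnm (hyK m))
    have hexp := norm_add_sq_real (y n) (y m - y n)
    rw [add_sub_cancel] at hexp
    rw [zero_sub, inner_neg_left] at hvar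
    linarith
  obtain ⟨R, hR⟩ := hbdd.subset_closedBall 0
  have hmono : Monotone fun n => ‖y n‖ ^ 2 :=
    monotone_nat_of_le_succ fun n => by
      linarith [hstep n (n + 1) n.le_succ, sq_nonneg ‖y (n + 1) - y n‖]
  have hbound : BddAbove (range fun n => ‖y n‖ ^ 2) := by
    refine ⟨R ^ 2, forall_mem_range.2 fun n => ?_⟩
    have := mem_closedBall_zero_iff.1 (hR (hanti (Nat.zero_le n) (hyK n)))
    gcongr
  have hlim := tendsto_atTop_ciSup hmono hbound
  have hcauchy : CauchySeq y := by
    refine Metric.cauchySeq_iff'.2 fun ε hε => ?_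
    obtain ⟨N, hN⟩ := eventually_atTop.1
      (hlim.eventually (lt_mem_nhds (sub_lt_self _ (pow_pos hε 2))))
    refine ⟨N, fun n hn => ?_⟩
    have hle : ‖y n‖ ^ 2 ≤ ⨆ k, ‖y k‖ ^ 2 := le_ciSup hbound n
    have := hstep N n hn
    rw [dist_eq_norm]
    exact lt_of_pow_lt_pow_left₀ 2 hε.le (by linarith [hN N le_rfl])
  obtain ⟨z, hz⟩ := cauchySeq_tendsto_of_complete hcauchy
  exact ⟨z, mem_iInter.2 fun n => (hclosed n).mem_of_tendsto hz
    (eventually_atTop.2 ⟨n, fun m hm => hanti hm (hyK m)⟩)⟩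

theorem ConvexOn.exists_forall_le_of_coercive [CompleteSpace H] {f : H → ℝ}
    (hconv : ConvexOn ℝ univ f) (hdiff : Differentiable ℝ f)
    (hcoer : ∀ M, ∃ R, ∀ z : H, R ≤ ‖z‖ → M ≤ f z) : ∃ xs, ∀ y, f xs ≤ f y := by
  have hbdd := hconv.bddBelow_of_coercive hdiff hcoer
  set m := ⨅ z, f z
  obtain ⟨R, hR⟩ := exists_norm_lt_of_coercive hcoer (m + 1)
  obtain ⟨xs, hxs⟩ : (⋂ n : ℕ, {z | f z ≤ m + 1 / (n + 1)}).Nonempty := by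
    refine nonempty_iInter_of_antitone_of_isClosed_of_convex (fun n k hnk z hz => ?_)
      (fun n => ?_) (fun n => isClosed_le hdiff.continuous continuous_const)
      (fun n => by simpa using hconv.convex_le (m + 1 / (n + 1))) ?_
    · have : (n : ℝ) ≤ k := by exact_mod_cast hnk
      exact le_trans (b := m + 1 / (k + 1)) hz (by gcongr)
    · obtain ⟨z, hz⟩ := exists_lt_of_ciInf_lt (lt_add_of_pos_right m (Nat.one_div_pos_of_nat))
      exact ⟨z, hz.le⟩
    · exact Metric.isBounded_ball.subset fun z hz => mem_ball_zero_iff.2 (hR z (by simpa using hz))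
  refine ⟨xs, fun y => le_trans ?_ (ciInf_le hbdd y)⟩
  refine le_of_forall_pos_lt_add fun ε hε => ?_
  obtain ⟨n, hn⟩ := exists_nat_one_div_lt hε
  exact (mem_iInter.1 hxs n).trans_lt (by linarith)

theorem exists_add_smul_le_of_inner_le {f : H → ℝ} {g x d : H} {L ℓ δ : ℝ} (hL : 0 < L)
    (hℓ : 1 < ℓ) (hsmooth : ∀ y, f y - f x - ⟪g, y - x⟫ ≤ L / ℓ * ‖y - x‖ ^ ℓ) (hd : d ≠ 0)
    (hδ : 0 ≤ δ) (hslope : ⟪g, d⟫ ≤ -(δ * ‖d‖)) :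
    ∃ γ : ℝ, f (x + γ • d) ≤ f x - (ℓ / (2 * L)) ^ (1 / (ℓ - 1)) / 2 * δ ^ (1 / (ℓ - 1) + 1) := by
  set p := 1 / (ℓ - 1) with hp
  have hp0 : 0 < p := one_div_pos.2 (sub_pos.2 hℓ)
  have hdpos : 0 < ‖d‖ := norm_pos_iff.2 hd
  -- step length `s` along the unit direction, chosen so that the smoothness term `L / ℓ * s ^ ℓ`
  -- is exactly half of the first-order decrease `s * δ`
  set s := (ℓ * δ / (2 * L)) ^ p with hs
  have hs0 : 0 ≤ s := by positivity
  have hspow : L / ℓ * s ^ ℓ = s * δ / 2 := by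
    have hsl : s ^ (ℓ - 1) = ℓ * δ / (2 * L) := by
      rw [hs, ← Real.rpow_mul (by positivity), hp, one_div_mul_cancel (by linarith),
        Real.rpow_one]
    have hsℓ : s ^ ℓ = s * s ^ (ℓ - 1) := by
      conv_lhs => rw [show ℓ = 1 + (ℓ - 1) by ring]
      rw [Real.rpow_add' hs0 (by linarith), Real.rpow_one]
    rw [hsℓ, hsl]
    field_simp
  have hgain : s * δ / 2 = (ℓ / (2 * L)) ^ p / 2 * δ ^ (p + 1) := by
    rw [hs, mul_div_right_comm, mul_comm ℓ, mul_div_assoc δ,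
      Real.mul_rpow hδ (by positivity), Real.rpow_add_one' hδ (by linarith)]
    ring
  refine ⟨s / ‖d‖, ?_⟩
  have hnorm : ‖(s / ‖d‖) • d‖ = s := by
    rw [norm_smul, Real.norm_of_nonneg (by positivity), div_mul_cancel₀ _ hdpos.ne']
  have hinner : ⟪g, (s / ‖d‖) • d⟫ ≤ -(s * δ) := by
    rw [real_inner_smul_right]
    calc s / ‖d‖ * ⟪g, d⟫ ≤ s / ‖d‖ * -(δ * ‖d‖) := by gcongr
      _ = -(s * δ) := by field_simp
  have := hsmooth (x + (s / ‖d‖) • d)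
  rw [add_sub_cancel_left, hnorm, hspow] at this
  linarith

end InnerProductSpace

def DualOrDescent (h u : ℕ → ℝ) (C τ p : ℝ) : Prop :=
  ∀ t, 0 < u t → u (t + 1) = u t / τ ∨ (u (t + 1) = u t ∧ h (t + 1) ≤ h t - C * u t ^ (p + 1))

namespace DualOrDescent

variable {h u : ℕ → ℝ} {m G C τ p : ℝ}

theorem pos_and_le (hstep : DualOrDescent h u C τ p) (hτ : 1 < τ) (hu0 : 0 < u 0) (t : ℕ) :
    0 < u t ∧ u t ≤ u 0 := by
  induction t with
  | zero => exact ⟨hu0, le_rfl⟩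
  | succ t ih =>
    rcases hstep t ih.1 with hdual | ⟨hkeep, -⟩
    · rw [hdual]
      exact ⟨div_pos ih.1 (by linarith), (div_le_self ih.1.le hτ.le).trans ih.2⟩
    · rwa [hkeep]

theorem potential_le (hstep : DualOrDescent h u C τ p) (hG : 0 < G) (hC : 0 < C) (hτ : 1 < τ)
    (hp : 0 < p) (hh : ∀ t, m ≤ h t) (hu0 : 0 < u 0) (hgap : ∀ t, h t - m ≤ G * u t)
    (t : ℕ) :
    t + (h t - m) / (C * u t ^ (p + 1)) ≤ (u 0 ^ p + G / C * τ ^ p) / (τ ^ p - 1) * u t ^ (-p) := by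
  have hq : 1 < τ ^ p := Real.one_lt_rpow hτ hp
  set a := (u 0 ^ p + G / C * τ ^ p) / (τ ^ p - 1) with ha
  have haq : a * (τ ^ p - 1) = u 0 ^ p + G / C * τ ^ p := div_mul_cancel₀ _ (by linarith)
  have hgap' : ∀ t, (h t - m) / (C * u t ^ (p + 1)) ≤ G / C * u t ^ (-p) := by
    intro t
    have hut := (hstep.pos_and_le hτ hu0 t).1
    calc (h t - m) / (C * u t ^ (p + 1)) ≤ G * u t / (C * u t ^ (p + 1)) := by
          gcongr
          exact hgap t
      _ = G / C * u t ^ (-p) := by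
        rw [Real.rpow_add_one' hut.le (by linarith), Real.rpow_neg hut.le]
        field_simp
  induction t with
  | zero =>
    have hGa : G / C ≤ a := by
      rw [ha, le_div_iff₀ (by linarith)]
      nlinarith [Real.rpow_pos_of_pos hu0 p, div_pos hG hC]
    push_cast
    nlinarith [hgap' 0, Real.rpow_pos_of_pos hu0 (-p)]
  | succ t ih =>
    obtain ⟨hut, hle⟩ := hstep.pos_and_le hτ hu0 t
    have hcu : 0 < C * u t ^ (p + 1) := by positivity
    have hnonneg : 0 ≤ (h t - m) / (C * u t ^ (p + 1)) := div_nonneg (sub_nonneg.2 (hh t)) hcu.le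
    push_cast
    rcases hstep t hut with hdual | ⟨hkeep, hdesc⟩
    · have hpow : u (t + 1) ^ (-p) = τ ^ p * u t ^ (-p) := by
        rw [hdual, Real.div_rpow hut.le (by linarith), Real.rpow_neg (x := τ) (by linarith)]
        field_simp
      -- `u t ≤ u 0` pays for the extra unit of time
      have hratio : 1 ≤ u 0 ^ p * u t ^ (-p) := by
        rw [Real.rpow_neg hut.le, ← div_eq_mul_inv, one_le_div (by positivity)]
        exact Real.rpow_le_rpow hut.le hle hp.le
      have hsplit : a * (τ ^ p * u t ^ (-p))
          = a * u t ^ (-p) + u 0 ^ p * u t ^ (-p) + G / C * (τ ^ p * u t ^ (-p)) := by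
        linear_combination u t ^ (-p) * haq
      have hnext := hgap' (t + 1)
      rw [hpow] at hnext ⊢
      linarith
    · have hnext : (h (t + 1) - m) / (C * u t ^ (p + 1)) ≤ (h t - m) / (C * u t ^ (p + 1)) - 1 :=
        calc (h (t + 1) - m) / (C * u t ^ (p + 1))
            ≤ (h t - m - C * u t ^ (p + 1)) / (C * u t ^ (p + 1)) :=
              div_le_div_of_nonneg_right (by linarith) hcu.le
          _ = (h t - m) / (C * u t ^ (p + 1)) - 1 := by rw [sub_div, div_self hcu.ne']
      rw [hkeep]
      linarith

theorem exists_rate (hstep : DualOrDescent h u C τ p) (hG : 0 < G) (hC : 0 < C) (hτ : 1 < τ)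
    (hp : 0 < p) (hh : ∀ t, m ≤ h t) (hu0 : 0 < u 0) (hgap : ∀ t, h t - m ≤ G * u t) :
    ∃ A > 0, ∀ ε : ℝ, 0 < ε → ∀ t : ℕ, A * (1 + ε ^ (-p)) ≤ t → h t - m ≤ ε := by
  set a := (u 0 ^ p + G / C * τ ^ p) / (τ ^ p - 1)
  have ha : 0 < a := div_pos (by positivity) (by linarith [Real.one_lt_rpow hτ hp])
  refine ⟨a * G ^ p, by positivity, fun ε hε t ht => ?_⟩
  by_contra! hlt
  have hut := (hstep.pos_and_le hτ hu0 t).1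
  have hεu : ε / G < u t := (div_lt_iff₀ hG).2 (by linarith [hgap t, mul_comm G (u t)])
  have hpow : u t ^ (-p) < G ^ p * ε ^ (-p) := by
    calc u t ^ (-p) < (ε / G) ^ (-p) := Real.rpow_lt_rpow_of_neg (by positivity) hεu (by linarith)
      _ = G ^ p * ε ^ (-p) := by
        rw [Real.div_rpow hε.le hG.le, Real.rpow_neg hG.le]
        field_simp
  have hpot := hstep.potential_le hG hC hτ hp hh hu0 hgap t
  have hnonneg : 0 ≤ (h t - m) / (C * u t ^ (p + 1)) :=
    div_nonneg (sub_nonneg.2 (hh t)) (by positivity)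
  nlinarith [Real.rpow_pos_of_pos hε (-p), Real.rpow_pos_of_pos hG p]

end DualOrDescent

namespace IsBMPTrace

variable {H : Type*} [NormedAddCommGroup H] [InnerProductSpace ℝ H] {f : H → ℝ} {f' : H → H}
  {D : Set H} {κ η τ : ℝ} {x : ℕ → H} {φ : ℕ → ℝ}

theorem antitone (htrace : IsBMPTrace f f' D κ η τ x φ) : Antitone fun t => f (x t) := by
  refine antitone_nat_of_succ_le fun t => ?_
  rcases htrace.2.2 t with ⟨_, _, _, _, _, _, ⟨_, _, hls⟩, _⟩ | ⟨_, hx, _⟩ |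
    ⟨_, _, _, ⟨_, _, hls⟩, _⟩
  · simpa using hls 0
  · rw [hx]
  · simpa using hls 0

theorem sub_le_mul_neg [CompleteSpace H] (htrace : IsBMPTrace f f' D κ η τ x φ) {r : ℝ}
    (hr : 0 < r) (hball : Metric.ball (0 : H) r ⊆ convexHull ℝ (D ∪ -D))
    (hdiff : ∀ z, HasGradientAt f (f' z) z) (hconv : ConvexOn ℝ univ f) (hτ : 0 < τ)
    {xs : H} {M : ℝ} (hM : ∀ t, ‖x t - xs‖ ≤ M) (t : ℕ) :
    f (x t) - f xs ≤ τ * M / r * -φ t := by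
  have hcert : ∀ t c, (∀ z ∈ convexHull ℝ (D ∪ -D), c ≤ ⟪f' (x t), z⟫) →
      f (x t) - f xs ≤ M / r * -c := by
    intro t c hc
    have hgrad := mul_norm_le_neg_of_forall_mem_ball hr fun z hz => hc z (hball hz)
    calc f (x t) - f xs ≤ ⟪f' (x t), x t - xs⟫ := hconv.sub_le_inner_of_hasGradientAt (hdiff _) xs
      _ ≤ ‖f' (x t)‖ * M := (real_inner_le_norm _ _).trans (by gcongr; exact hM t)
      _ ≤ M / r * -c := by
        rw [div_mul_eq_mul_div, le_div_iff₀ hr]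
        nlinarith [(norm_nonneg _).trans (hM t)]
  induction t with
  | zero =>
    convert hcert 0 _ htrace.2.1 using 1
    ring
  | succ t ih =>
    rcases htrace.2.2 t with ⟨_, _, _, _, _, _, _, hφ⟩ | ⟨hc, hx, hφ⟩ | ⟨_, _, _, _, hφ⟩
    · rw [hφ]
      linarith [htrace.antitone t.le_succ]
    · rw [hx, hφ]
      convert hcert t _ hc using 1
      field_simp
    · rw [hφ]
      linarith [htrace.antitone t.le_succ]

theorem exists_descent_constant (htrace : IsBMPTrace f f' D κ η τ x φ)
    (hDbdd : Bornology.IsBounded D) {L ℓ : ℝ} (hL : 0 < L) (hℓ : 1 < ℓ)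
    (hsmooth : ∀ z y : H, f y - f z - ⟪f' z, y - z⟫ ≤ L / ℓ * ‖y - z‖ ^ ℓ) (hκ : 0 < κ)
    (hη : 0 < η) :
    ∃ C > 0, DualOrDescent (fun t => f (x t)) (fun t => -φ t) C τ (1 / (ℓ - 1)) := by
  obtain ⟨B, hB, hDB⟩ := hDbdd.exists_pos_norm_le
  have hBD : ∀ v ∈ D ∪ -D, ‖v‖ ≤ B := by
    rintro v (hv | hv)
    · exact hDB v hv
    · simpa using hDB (-v) hv
  set μ := max κ η
  set p := 1 / (ℓ - 1)
  refine ⟨(ℓ / (2 * L)) ^ p / 2 / (μ * B) ^ (p + 1), by positivity, fun t hu => ?_⟩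
  dsimp only at hu ⊢
  set u := -φ t
  set δ := u / (μ * B)
  have hδ : 0 < δ := by positivity
  have hdesc : ∀ d : H, d ≠ 0 → ⟪f' (x t), d⟫ ≤ -(δ * ‖d‖) →
      (∀ γ : ℝ, f (x (t + 1)) ≤ f (x t + γ • d)) →
      f (x (t + 1)) ≤ f (x t) - (ℓ / (2 * L)) ^ p / 2 / (μ * B) ^ (p + 1) * u ^ (p + 1) := by
    intro d hd hslope hls
    obtain ⟨γ, hγ⟩ := exists_add_smul_le_of_inner_le hL hℓ (hsmooth (x t)) hd hδ.le hslope
    rw [Real.div_rpow hu.le (by positivity)] at hγ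
    calc f (x (t + 1)) ≤ _ := (hls γ).trans hγ
      _ = _ := by ring
  rcases htrace.2.2 t with ⟨S, g, hSD, ⟨v, hvS, hv⟩, hg, hproj, ⟨_, _, hls⟩, hφ'⟩ | ⟨_, _, hφ'⟩ |
    ⟨v, hvD, hv, ⟨_, _, hls⟩, hφ'⟩
  · -- `g` is long because it agrees with `∇f (x t)` on the atom `v`, whose slope is steep
    have hgv : u / η ≤ ‖g‖ * B := by
      have hinner : ⟪g, v⟫ = ⟪f' (x t), v⟫ := hproj v (Submodule.subset_span hvS)
      have hφη : φ t / η = -(u / η) := by rw [neg_div, neg_neg]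
      calc u / η ≤ -⟪g, v⟫ := by linarith
        _ ≤ ‖g‖ * ‖v‖ := (neg_le_abs _).trans (abs_real_inner_le_norm g v)
        _ ≤ ‖g‖ * B := by gcongr; exact hBD v (hSD hvS)
    have hδg : δ ≤ ‖g‖ := by
      calc δ ≤ u / (η * B) := by simp only [δ]; gcongr; exact le_max_right κ η
        _ ≤ ‖g‖ := by rw [← div_div, div_le_iff₀ hB]; exact hgv
    refine Or.inr ⟨by rw [hφ'], hdesc (-g) ?_ ?_ fun γ => ?_⟩
    · exact neg_ne_zero.2 (norm_pos_iff.1 (hδ.trans_le hδg))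
    · rw [inner_neg_right, ← hproj g hg, real_inner_self_eq_norm_sq, norm_neg]
      nlinarith
    · simpa [smul_neg, ← sub_eq_add_neg] using hls γ
  · exact Or.inl (by rw [hφ', neg_div])
  · have hφκ : φ t / κ = -(u / κ) := by rw [neg_div, neg_neg]
    refine Or.inr ⟨by rw [hφ'], hdesc v ?_ ?_ hls⟩
    · rintro rfl
      rw [inner_zero_right, hφκ] at hv
      linarith [div_pos hu hκ]
    · calc ⟪f' (x t), v⟫ ≤ -(u / κ) := hφκ ▸ hv
        _ ≤ -(u / μ) := by gcongr; exact le_max_left κ η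
        _ = -(δ * B) := by simp only [δ]; field_simp
        _ ≤ -(δ * ‖v‖) := by gcongr; exact hBD v hvD

end IsBMPTrace

theorem stmt_18_general
    {H : Type*} [NormedAddCommGroup H] [InnerProductSpace ℝ H] [CompleteSpace H]
    (D : Set H) (hDbdd : Bornology.IsBounded D)
    (r : ℝ) (hr : 0 < r) (hball : Metric.ball (0 : H) r ⊆ convexHull ℝ (D ∪ -D))
    (f : H → ℝ) (f' : H → H) (hdiff : ∀ z, HasGradientAt f (f' z) z)
    (L ℓ : ℝ) (hL : 0 < L) (hℓ : 1 < ℓ)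
    (hsmooth : ∀ z y : H, f y - f z - ⟪f' z, y - z⟫ ≤ L / ℓ * ‖y - z‖ ^ ℓ)
    (hconv : ConvexOn ℝ Set.univ f)
    (hcoer : ∀ M : ℝ, ∃ R : ℝ, 0 < R ∧ ∀ z : H, R ≤ ‖z‖ → M ≤ f z)
    (κ η τ : ℝ) (hκ : 1 ≤ κ) (hη : 0 < η) (hτ : 1 < τ)
    (x : ℕ → H) (φ : ℕ → ℝ) (htrace : IsBMPTrace f f' D κ η τ x φ) :
    ∃ xs : H, (∀ y, f xs ≤ f y) ∧
      ∃ A : ℝ, 0 < A ∧ ∀ ε : ℝ, 0 < ε → ∀ t : ℕ,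
        A * (1 + ε ^ (-(1 / (ℓ - 1)))) ≤ (t : ℝ) → f (x t) - f xs ≤ ε := by
  have hcoer' : ∀ M, ∃ R, ∀ z : H, R ≤ ‖z‖ → M ≤ f z := fun M => (hcoer M).imp fun _ hR => hR.2
  obtain ⟨xs, hxs⟩ :=
    hconv.exists_forall_le_of_coercive (fun z => (hdiff z).differentiableAt) hcoer'
  refine ⟨xs, hxs, ?_⟩
  obtain ⟨R, hR⟩ := exists_norm_lt_of_coercive hcoer' (f (x 0))
  have hR0 : 0 < R := (norm_nonneg _).trans_lt (hR _ le_rfl)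
  have hM : ∀ t, ‖x t - xs‖ ≤ R + ‖xs‖ := fun t =>
    (norm_sub_le _ _).trans (by linarith [hR _ (htrace.antitone (Nat.zero_le t))])
  have hgap := htrace.sub_le_mul_neg hr hball hdiff hconv (by linarith) hM
  rcases htrace.1.lt_or_eq with hφ0 | hφ0
  · obtain ⟨C, hC, hstep⟩ := htrace.exists_descent_constant hDbdd hL hℓ hsmooth (by linarith) hη
    exact hstep.exists_rate (by positivity) hC hτ (one_div_pos.2 (sub_pos.2 hℓ)) (fun t => hxs _)
      (neg_pos.2 hφ0) hgap
  · refine ⟨1, one_pos, fun ε hε t _ => ?_⟩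
    have := hgap 0
    rw [hφ0, neg_zero, mul_zero] at this
    linarith [htrace.antitone (Nat.zero_le t)]

/-- Sublinear convergence of BMP for `L`-smooth (order `ℓ > 1`), convex, coercive objectives:
`f` attains its minimum, and there is `A > 0` such that for every `ε > 0`, every iterate with
index `t ≥ A (1 + ε^(-1/(ℓ-1)))` satisfies `f (x t) - min f ≤ ε`. -/
theorem stmt_18
    {H : Type*} [NormedAddCommGroup H] [InnerProductSpace ℝ H] [CompleteSpace H]
    (D : Set H) (hDne : D.Nonempty) (hDbdd : Bornology.IsBounded D)
    (r : ℝ) (hr : 0 < r) (hball : Metric.ball (0 : H) r ⊆ convexHull ℝ (D ∪ -D))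
    (f : H → ℝ) (f' : H → H) (hdiff : ∀ z, HasGradientAt f (f' z) z)
    (L ℓ : ℝ) (hL : 0 < L) (hℓ : 1 < ℓ)
    (hsmooth : ∀ z y : H, f y - f z - ⟪f' z, y - z⟫ ≤ L / ℓ * ‖y - z‖ ^ ℓ)
    (hconv : ConvexOn ℝ Set.univ f)
    (hcoer : ∀ M : ℝ, ∃ R : ℝ, 0 < R ∧ ∀ z : H, R ≤ ‖z‖ → M ≤ f z)
    (κ η τ : ℝ) (hκ : 1 ≤ κ) (hη : 0 < η) (hτ : 1 < τ)
    (x : ℕ → H) (φ : ℕ → ℝ) (htrace : IsBMPTrace f f' D κ η τ x φ) :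
    ∃ xs : H, (∀ y, f xs ≤ f y) ∧
      ∃ A : ℝ, 0 < A ∧ ∀ ε : ℝ, 0 < ε → ∀ t : ℕ,
        A * (1 + ε ^ (-(1 / (ℓ - 1)))) ≤ (t : ℝ) → f (x t) - f xs ≤ ε :=
  stmt_18_general D hDbdd r hr hball f f' hdiff L ℓ hL hℓ hsmooth hconv hcoer κ η τ hκ hη hτ x φ
    htrace
end
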